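/- arXiv:1507.00641 — 5 statements merged into one kernel-verified Lean document; each statement's English description precedes it below -/
import Mathlib

section
/- Let [a,b] ⊆ [0,1], κ > 0, m ∈ ℕ and N ∈ ℕ. Suppose g ∈ C¹([a,b]) with g'(x) > 0 for all x ∈ [a,b], let σ := max_{x∈[a,b]} |g'(x)|, and suppose Ψ := (f/g') ∘ g^{-1} belongs to C^{m+1}([g(a), g(b)]). Then the composite moment-free Filon rule satisfies |I_κ^{[a,b]}[f,g] − Q_{N,κ,m}^{[a,b]}[f,g]| ≤ (3(m+1)/(m! κ² N^{m−1})) ‖Ψ^{(m+1)}‖_∞ σ^m (b−a)^m. In particular, if N = ⌈σ⌉ (the smallest integer not less than σ), then |I_κ^{[a,b]}[f,g] − Q_{N,κ,m}^{[a,b]}[f,g]| ≤ (3(m+1)/(m! κ²)) ‖Ψ^{(m+1)}‖_∞ σ (b−a)^m. -/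
open scoped BigOperators
open MeasureTheory

noncomputable section

/-- Oscillatory integral `∫_a^b f(x) e^{iκ g(x)} dx`. -/
def oscInt (κ : ℝ) (f g : ℝ → ℝ) (a b : ℝ) : ℂ :=
  ∫ x in a..b, (f x : ℂ) * Complex.exp (Complex.I * κ * g x)

/-- Moment-free Filon rule: `∫_{g(t_0)}^{g(t_m)} p_m(x) e^{iκx} dx` where `p_m` is the
Lagrange polynomial interpolating `Ψ` at the points `g(t_j)`. -/
def filonQ (κ : ℝ) (m : ℕ) (g : ℝ → ℝ) (Ψ : ℝ → ℝ) (t : Fin (m+1) → ℝ) : ℂ :=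
  ∫ x in (g (t 0))..(g (t (Fin.last m))),
    (((Lagrange.interpolate Finset.univ (fun j => g (t j)) (fun j => Ψ (g (t j)))).eval x : ℝ) : ℂ)
      * Complex.exp (Complex.I * κ * x)

/-- Composite moment-free Filon rule `Q_{N,κ,m}^{[a,b]}[f,g] = Σ_{l=1}^N Q_{κ,m}^{[y_{l-1},y_l]}`,
with the nodes on each subinterval supplied by `t`. -/
def compFilonQ (κ : ℝ) (m N : ℕ) (g : ℝ → ℝ) (Ψ : ℝ → ℝ)
    (t : Fin N → Fin (m+1) → ℝ) : ℂ :=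
  ∑ l : Fin N, filonQ κ m g Ψ (t l)

/-- Admissible node families for the composite rule on `[a,b]` with `N` equal subintervals:
on the `l`-th subinterval `[y_l, y_{l+1}]` (`y_l = a + (b-a) l/N`) the `m+1` strictly
increasing nodes include both endpoints. -/
def FilonNodes (a b : ℝ) (m N : ℕ) (t : Fin N → Fin (m+1) → ℝ) : Prop :=
  ∀ l : Fin N, StrictMono (t l) ∧ t l 0 = a + (b-a)*(l:ℝ)/(N:ℝ) ∧
    t l (Fin.last m) = a + (b-a)*((l:ℝ)+1)/(N:ℝ)

/-!
On a subinterval the Filon error is `∫ E(x) e^{iκx} dx` with `E = Ψ - p_m`, which vanishes at the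
`m + 1` nodes, in particular at both endpoints. Integrating by parts twice bounds it by
`(2 ‖E'‖ + h ‖E''‖) / κ²`, `h` the length of the mapped subinterval. By Rolle `E'` has `m` zeros
and `E''` has `m - 1`, and since `E^{(m+1)} = Ψ^{(m+1)}` the classical interpolation-error estimate
gives `‖E'‖ ≤ C h^m / m!` and `‖E''‖ ≤ C h^{m-1} / (m-1)!`, so the error is at most
`(m + 2) C h^m / (m! κ²)`. As `g` is `σ`-Lipschitz, `h ≤ σ (b - a) / N`; summing over the `N`
subintervals and using `m + 2 ≤ 3 (m + 1)` gives the first bound, and `σ ≤ N` the second.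
-/

open Set

theorem exists_finset_derivWithin_eq_zero {α β : ℝ} {F : ℝ → ℝ}
    (hF : ContinuousOn F (Icc α β)) {Z : Finset ℝ} (hZ : ↑Z ⊆ Icc α β)
    (hF0 : ∀ z ∈ Z, F z = 0) :
    ∃ Z' : Finset ℝ, Z.card ≤ Z'.card + 1 ∧ ↑Z' ⊆ Ioo α β ∧
      ∀ z ∈ Z', derivWithin F (Icc α β) z = 0 := by
  have rolle : ∀ p : ℝ × ℝ, ∃ c, p.1 ∈ Z → p.2 ∈ Z → p.1 < p.2 →
      c ∈ Ioo p.1 p.2 ∧ derivWithin F (Icc α β) c = 0 := by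
    rintro ⟨x, y⟩
    by_cases h : x ∈ Z ∧ y ∈ Z ∧ x < y
    · obtain ⟨hx, hy, hxy⟩ := h
      obtain ⟨c, hc, hc0⟩ := exists_deriv_eq_zero hxy
        (hF.mono (Icc_subset_Icc (hZ hx).1 (hZ hy).2)) ((hF0 x hx).trans (hF0 y hy).symm)
      refine ⟨c, fun _ _ _ => ⟨hc, ?_⟩⟩
      rwa [derivWithin_of_mem_nhds (Icc_mem_nhds ((hZ hx).1.trans_lt hc.1)
        (hc.2.trans_le (hZ hy).2))]
    · exact ⟨0, fun hx hy hxy => (h ⟨hx, hy, hxy⟩).elim⟩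
  choose c hc using rolle
  refine ⟨((Z ×ˢ Z).filter fun p => p.1 < p.2).image c, ?_, ?_, ?_⟩
  · refine Finset.card_le_of_interleaved fun x hx y hy hxy _ =>
      ⟨c (x, y), ?_, (hc (x, y) hx hy hxy).1⟩
    exact Finset.mem_image_of_mem _ (by simp [hx, hy, hxy])
  · intro z hz
    simp only [Finset.coe_image, Finset.coe_filter, Finset.mem_product] at hz
    obtain ⟨⟨x, y⟩, ⟨⟨hx, hy⟩, hxy⟩, rfl⟩ := hz
    have hcxy := (hc _ hx hy hxy).1
    exact ⟨(hZ hx).1.trans_lt hcxy.1, hcxy.2.trans_le (hZ hy).2⟩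
  · simp only [Finset.mem_image, Finset.mem_filter, Finset.mem_product]
    rintro _ ⟨⟨x, y⟩, ⟨⟨hx, hy⟩, hxy⟩, rfl⟩
    exact (hc _ hx hy hxy).2

theorem exists_iteratedDerivWithin_eq_zero {α β : ℝ} (hαβ : α < β) {n : ℕ} {F : ℝ → ℝ}
    (hF : ContDiffOn ℝ n F (Icc α β)) {Z : Finset ℝ} (hZ : ↑Z ⊆ Icc α β)
    (hcard : n + 1 ≤ Z.card) (hF0 : ∀ z ∈ Z, F z = 0) :
    ∃ ξ ∈ Icc α β, iteratedDerivWithin n F (Icc α β) ξ = 0 := by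
  induction n generalizing F Z with
  | zero =>
    obtain ⟨z, hz⟩ := Finset.card_pos.mp hcard
    exact ⟨z, hZ hz, by simpa using hF0 z hz⟩
  | succ n ih =>
    obtain ⟨Z', hcard', hZ', hZ'0⟩ := exists_finset_derivWithin_eq_zero hF.continuousOn hZ hF0
    rw [iteratedDerivWithin_succ']
    exact ih (hF.derivWithin (uniqueDiffOn_Icc hαβ) (by norm_cast))
      (hZ'.trans Ioo_subset_Icc_self) (by omega) hZ'0

section
variable {𝕜 : Type*} [NontriviallyNormedField 𝕜]

theorem Polynomial.contDiff_eval (p : Polynomial 𝕜) {n : WithTop ℕ∞} :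
    ContDiff 𝕜 n fun x => p.eval x := by
  simpa using p.contDiff_aeval (𝕜 := 𝕜) n

theorem Polynomial.iteratedDeriv_eval (p : Polynomial 𝕜) (n : ℕ) :
    iteratedDeriv n (fun x => p.eval x) = fun x => (Polynomial.derivative^[n] p).eval x := by
  induction n generalizing p with
  | zero => simp
  | succ n ih =>
    have hderiv : _root_.deriv (fun x => p.eval x) = fun x => p.derivative.eval x := by
      ext x; exact p.deriv
    rw [iteratedDeriv_succ', hderiv, ih, Function.iterate_succ_apply]

theorem Polynomial.iteratedDerivWithin_eval (p : Polynomial 𝕜) (n : ℕ) {s : Set 𝕜} {x : 𝕜}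
    (hs : UniqueDiffOn 𝕜 s) (hx : x ∈ s) :
    iteratedDerivWithin n (fun x => p.eval x) s x = (Polynomial.derivative^[n] p).eval x := by
  rw [iteratedDerivWithin_eq_iteratedDeriv hs p.contDiff_eval.contDiffAt hx, p.iteratedDeriv_eval]

end

open Polynomial in
theorem abs_le_of_card_zeros_le {α β M : ℝ} (hαβ : α < β) {n : ℕ} {F : ℝ → ℝ}
    (hF : ContDiffOn ℝ n F (Icc α β)) {Z : Finset ℝ} (hZ : ↑Z ⊆ Icc α β) (hcard : n ≤ Z.card)
    (hF0 : ∀ z ∈ Z, F z = 0)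
    (hM : ∀ x ∈ Icc α β, |iteratedDerivWithin n F (Icc α β) x| ≤ M) {x : ℝ}
    (hx : x ∈ Icc α β) :
    |F x| ≤ M * (β - α) ^ n / n.factorial := by
  obtain ⟨Z₀, hZ₀Z, hZ₀⟩ := Finset.exists_subset_card_eq hcard
  have hM₀ : 0 ≤ M := (abs_nonneg _).trans (hM x hx)
  have hβα : 0 ≤ β - α := by linarith
  by_cases hxZ₀ : x ∈ Z₀
  · rw [hF0 x (hZ₀Z hxZ₀), abs_zero]
    positivity
  set ω : ℝ[X] := ∏ z ∈ Z₀, (X - C z)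
  have hωx : ω.eval x ≠ 0 := by
    simp only [ω, eval_prod, eval_sub, eval_X, eval_C, Finset.prod_ne_zero_iff, sub_ne_zero]
    rintro z hz rfl
    exact hxZ₀ hz
  set c := F x / ω.eval x
  -- `F - c ω` vanishes on `Z₀` and at `x`, so its `n`-th derivative `F⁽ⁿ⁾ - c n!` has a zero.
  obtain ⟨ξ, hξ, hξ0⟩ := exists_iteratedDerivWithin_eq_zero hαβ
    (F := F - fun y => (C c * ω).eval y) (hF.sub (C c * ω).contDiff_eval.contDiffOn)
    (Z := insert x Z₀)
    (by simpa [insert_subset_iff] using ⟨hx, (Finset.coe_subset.2 hZ₀Z).trans hZ⟩)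
    (by rw [Finset.card_insert_of_notMem hxZ₀, hZ₀])
    (by
      simp only [Finset.mem_insert, forall_eq_or_imp, Pi.sub_apply, eval_mul, eval_C]
      refine ⟨by simp [c, hωx], fun z hz => ?_⟩
      simp [hF0 z (hZ₀Z hz), ω, eval_prod, Finset.prod_eq_zero hz])
  have hFξ : iteratedDerivWithin n F (Icc α β) ξ = c * n.factorial := by
    have hud := uniqueDiffOn_Icc hαβ
    rw [iteratedDerivWithin_sub hξ hud (hF ξ hξ) (C c * ω).contDiff_eval.contDiffWithinAt,
      (C c * ω).iteratedDerivWithin_eval n hud hξ, iterate_derivative_C_mul,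
      iterate_derivative_prod_X_sub_C hZ₀.ge, hZ₀, sub_eq_zero] at hξ0
    simpa using hξ0
  have hωx_le : |ω.eval x| ≤ (β - α) ^ n := by
    rw [eval_prod, Finset.abs_prod, ← hZ₀, ← Finset.prod_const]
    refine Finset.prod_le_prod (fun _ _ => abs_nonneg _) fun z hz => ?_
    have := hZ (hZ₀Z hz)
    simp only [eval_sub, eval_X, eval_C, abs_sub_le_iff]
    constructor <;> linarith [hx.1, hx.2, this.1, this.2]
  have hc : |c| ≤ M / n.factorial := by
    rw [le_div_iff₀ (by positivity)]
    simpa [hFξ, abs_mul] using hM ξ hξ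
  calc |F x| = |c| * |ω.eval x| := by rw [← abs_mul, div_mul_cancel₀ _ hωx]
    _ ≤ M / n.factorial * (β - α) ^ n := by gcongr
    _ = M * (β - α) ^ n / n.factorial := by ring

theorem abs_derivWithin_le_of_card_zeros_le {α β M : ℝ} (hαβ : α < β) {n : ℕ} {F : ℝ → ℝ}
    (hF : ContDiffOn ℝ (n + 1) F (Icc α β)) {Z : Finset ℝ} (hZ : ↑Z ⊆ Icc α β)
    (hcard : n + 1 ≤ Z.card) (hF0 : ∀ z ∈ Z, F z = 0)
    (hM : ∀ x ∈ Icc α β, |iteratedDerivWithin (n + 1) F (Icc α β) x| ≤ M) {x : ℝ}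
    (hx : x ∈ Icc α β) :
    |derivWithin F (Icc α β) x| ≤ M * (β - α) ^ n / n.factorial := by
  obtain ⟨Z', hcard', hZ', hZ'0⟩ := exists_finset_derivWithin_eq_zero hF.continuousOn hZ hF0
  refine abs_le_of_card_zeros_le hαβ (hF.derivWithin (uniqueDiffOn_Icc hαβ) le_rfl)
    (hZ'.trans Ioo_subset_Icc_self) (by omega) hZ'0 (fun y hy => ?_) hx
  rw [← iteratedDerivWithin_succ']
  exact hM y hy

theorem hasDerivAt_cexp_mul_div {c : ℂ} (hc : c ≠ 0) (x : ℝ) :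
    HasDerivAt (fun u : ℝ => Complex.exp (c * u) / c) (Complex.exp (c * x)) x := by
  have h := (((hasDerivAt_id (x : ℂ)).const_mul c).cexp.comp_ofReal).div_const c
  simp only [mul_one, id] at h
  rwa [mul_div_cancel_right₀ _ hc] at h

theorem integral_mul_cexp_eq {α β : ℝ} (hαβ : α < β) {c : ℂ} (hc : c ≠ 0) {φ : ℝ → ℝ}
    (hφ : ContDiffOn ℝ 1 φ (Icc α β)) :
    ∫ u in α..β, (φ u : ℂ) * Complex.exp (c * u) =
      φ β * (Complex.exp (c * β) / c) - φ α * (Complex.exp (c * α) / c) -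
        ∫ u in α..β, ((derivWithin φ (Icc α β) u : ℝ) : ℂ) * (Complex.exp (c * u) / c) := by
  have huIcc : uIcc α β = Icc α β := uIcc_of_le hαβ.le
  refine intervalIntegral.integral_mul_deriv_eq_deriv_mul_of_hasDerivWithinAt
    (fun x hx => ?_) (fun x _ => (hasDerivAt_cexp_mul_div hc x).hasDerivWithinAt) ?_ ?_
  · rw [huIcc] at hx ⊢
    exact (hφ.differentiableOn one_ne_zero x hx).hasDerivWithinAt.ofReal_comp
  · refine ContinuousOn.intervalIntegrable ?_
    rw [huIcc]
    exact Complex.continuous_ofReal.comp_continuousOn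
      (hφ.continuousOn_derivWithin (uniqueDiffOn_Icc hαβ) le_rfl)
  · exact (by fun_prop : Continuous fun u : ℝ => Complex.exp (c * u)).intervalIntegrable _ _

theorem norm_integral_mul_cexp_le {α β κ M : ℝ} (hαβ : α < β) (hκ : 0 < κ) {φ : ℝ → ℝ}
    (hφ : ContDiffOn ℝ 1 φ (Icc α β))
    (hM : ∀ x ∈ Icc α β, |derivWithin φ (Icc α β) x| ≤ M) :
    ‖∫ u in α..β, (φ u : ℂ) * Complex.exp (Complex.I * κ * u)‖
      ≤ (|φ α| + |φ β| + (β - α) * M) / κ := by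
  rw [integral_mul_cexp_eq hαβ (by simp [hκ.ne']) hφ]
  set e : ℝ → ℂ := fun u => Complex.exp (Complex.I * κ * u) / (Complex.I * κ)
  have he : ∀ y u : ℝ, ‖(y : ℂ) * e u‖ = |y| / κ := fun y u => by
    rw [norm_mul, norm_div, mul_assoc, ← Complex.ofReal_mul, Complex.norm_exp_I_mul_ofReal]
    simp [abs_of_pos hκ, div_eq_mul_inv]
  have hint : ‖∫ u in α..β, ((derivWithin φ (Icc α β) u : ℝ) : ℂ) * e u‖ ≤ M / κ * |β - α| := by
    refine intervalIntegral.norm_integral_le_of_norm_le_const fun x hx => ?_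
    rw [he]
    gcongr
    exact hM x (Ioc_subset_Icc_self (by rwa [uIoc_of_le hαβ.le] at hx))
  calc _ ≤ ‖(φ β : ℂ) * e β‖ + ‖(φ α : ℂ) * e α‖
        + ‖∫ u in α..β, ((derivWithin φ (Icc α β) u : ℝ) : ℂ) * e u‖ :=
        (norm_sub_le _ _).trans (add_le_add_left (norm_sub_le _ _) _)
    _ ≤ |φ β| / κ + |φ α| / κ + M / κ * |β - α| := by
        rw [he, he]
        exact add_le_add_right hint _
    _ = (|φ α| + |φ β| + (β - α) * M) / κ := by
        rw [abs_of_pos (sub_pos.2 hαβ)]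
        ring

theorem norm_integral_mul_cexp_le_of_eq_zero {α β κ M₁ M₂ : ℝ} (hαβ : α < β) (hκ : 0 < κ)
    {E : ℝ → ℝ} (hE : ContDiffOn ℝ 2 E (Icc α β)) (hEα : E α = 0) (hEβ : E β = 0)
    (hM₁ : ∀ x ∈ Icc α β, |derivWithin E (Icc α β) x| ≤ M₁)
    (hM₂ : ∀ x ∈ Icc α β, |derivWithin (derivWithin E (Icc α β)) (Icc α β) x| ≤ M₂) :
    ‖∫ u in α..β, (E u : ℂ) * Complex.exp (Complex.I * κ * u)‖
      ≤ (2 * M₁ + (β - α) * M₂) / κ ^ 2 := by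
  have hc : Complex.I * κ ≠ 0 := by simp [hκ.ne']
  have hE' : ContDiffOn ℝ 1 (derivWithin E (Icc α β)) (Icc α β) :=
    hE.derivWithin (uniqueDiffOn_Icc hαβ) (by norm_num)
  rw [integral_mul_cexp_eq hαβ hc (hE.of_le one_le_two), hEα, hEβ]
  simp_rw [Complex.ofReal_zero, zero_mul, sub_self, zero_sub, norm_neg, ← mul_div_assoc,
    intervalIntegral.integral_div, norm_div]
  have hcκ : ‖Complex.I * κ‖ = κ := by simp [abs_of_pos hκ]
  rw [hcκ, pow_two, ← div_div]
  gcongr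
  refine (norm_integral_mul_cexp_le hαβ hκ hE' hM₂).trans ?_
  gcongr
  linarith [hM₁ α (left_mem_Icc.2 hαβ.le), hM₁ β (right_mem_Icc.2 hαβ.le)]

theorem iteratedDerivWithin_eq_of_subset {𝕜 F : Type*} [NontriviallyNormedField 𝕜]
    [NormedAddCommGroup F] [NormedSpace 𝕜 F] {n : ℕ} {f : 𝕜 → F} {s t : Set 𝕜} {x : 𝕜}
    (hst : s ⊆ t) (hs : UniqueDiffOn 𝕜 s) (ht : UniqueDiffOn 𝕜 t) (hf : ContDiffOn 𝕜 n f t)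
    (hx : x ∈ s) :
    iteratedDerivWithin n f s x = iteratedDerivWithin n f t x := by
  simp only [iteratedDerivWithin_eq_iteratedFDerivWithin,
    iteratedFDerivWithin_subset hst hs ht hf hx]

theorem iteratedDerivWithin_sub_interpolate {m : ℕ} {Ψ : ℝ → ℝ} {s : Set ℝ}
    (hs : UniqueDiffOn ℝ s) (hΨ : ContDiffOn ℝ (m + 1) Ψ s) {u : Fin (m + 1) → ℝ}
    (hu : Function.Injective u) {x : ℝ} (hx : x ∈ s) :
    iteratedDerivWithin (m + 1)
        (fun y => Ψ y - (Lagrange.interpolate Finset.univ u fun j => Ψ (u j)).eval y) s x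
      = iteratedDerivWithin (m + 1) Ψ s x := by
  set p := Lagrange.interpolate Finset.univ u fun j => Ψ (u j)
  have hp : p.degree < (m + 1 : ℕ) :=
    (Lagrange.degree_interpolate_lt _ hu.injOn).trans_eq (by simp)
  change iteratedDerivWithin _ (Ψ - fun y => p.eval y) s x = _
  rw [iteratedDerivWithin_sub hx hs (by exact_mod_cast hΨ x hx) p.contDiff_eval.contDiffWithinAt,
    p.iteratedDerivWithin_eval _ hs hx, Polynomial.iterate_derivative_eq_zero_of_degree_lt hp,
    Polynomial.eval_zero, sub_zero]

theorem integral_sub_filonQ_id_eq {κ : ℝ} {m : ℕ} {Ψ : ℝ → ℝ} {u : Fin (m + 1) → ℝ}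
    (hu : u 0 ≤ u (Fin.last m)) (hΨ : ContinuousOn Ψ (Icc (u 0) (u (Fin.last m)))) :
    (∫ x in u 0..u (Fin.last m), (Ψ x : ℂ) * Complex.exp (Complex.I * κ * x))
        - filonQ κ m id Ψ u
      = ∫ x in u 0..u (Fin.last m),
          ((Ψ x - (Lagrange.interpolate Finset.univ u fun j => Ψ (u j)).eval x : ℝ) : ℂ)
            * Complex.exp (Complex.I * κ * x) := by
  have hint : ∀ φ : ℝ → ℝ, ContinuousOn φ (Icc (u 0) (u (Fin.last m))) →
      IntervalIntegrable (fun x => (φ x : ℂ) * Complex.exp (Complex.I * κ * x)) volume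
        (u 0) (u (Fin.last m)) :=
    fun φ hφ => ((Complex.continuous_ofReal.comp_continuousOn hφ).mul
      (by fun_prop : Continuous fun x : ℝ => Complex.exp (Complex.I * κ * x)).continuousOn
      ).intervalIntegrable_of_Icc hu
  simp only [filonQ, id_eq]
  rw [← intervalIntegral.integral_sub (hint Ψ hΨ) (hint _ (Polynomial.continuous _).continuousOn)]
  simp only [Complex.ofReal_sub, sub_mul]

theorem norm_integral_sub_filonQ_le {κ C : ℝ} (hκ : 0 < κ) {m : ℕ} (hm : 1 ≤ m) {Ψ : ℝ → ℝ}
    {u : Fin (m + 1) → ℝ} (hu : StrictMono u)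
    (hΨ : ContDiffOn ℝ (m + 1) Ψ (Icc (u 0) (u (Fin.last m))))
    (hC : ∀ x ∈ Icc (u 0) (u (Fin.last m)),
      |iteratedDerivWithin (m + 1) Ψ (Icc (u 0) (u (Fin.last m))) x| ≤ C) :
    ‖(∫ x in u 0..u (Fin.last m), (Ψ x : ℂ) * Complex.exp (Complex.I * κ * x))
        - filonQ κ m id Ψ u‖
      ≤ (m + 2) * C * (u (Fin.last m) - u 0) ^ m / (m.factorial * κ ^ 2) := by
  obtain ⟨n, rfl⟩ : ∃ n, m = n + 1 := ⟨m - 1, by omega⟩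
  set α := u 0
  set β := u (Fin.last (n + 1))
  have hαβ : α < β := hu Fin.last_pos
  have hs : UniqueDiffOn ℝ (Icc α β) := uniqueDiffOn_Icc hαβ
  rw [integral_sub_filonQ_id_eq hαβ.le hΨ.continuousOn]
  set E : ℝ → ℝ := fun x => Ψ x - (Lagrange.interpolate Finset.univ u fun j => Ψ (u j)).eval x
  have hE : ContDiffOn ℝ (n + 1 + 1) E (Icc α β) := by
    push_cast at hΨ
    exact hΨ.sub (Polynomial.contDiff_eval _).contDiffOn
  have hE₁ : ContDiffOn ℝ (n + 1) (derivWithin E (Icc α β)) (Icc α β) := hE.derivWithin hs le_rfl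
  have hE₁_bound : ∀ x ∈ Icc α β,
      |iteratedDerivWithin (n + 1) (derivWithin E (Icc α β)) (Icc α β) x| ≤ C := fun x hx => by
      rw [← iteratedDerivWithin_succ', iteratedDerivWithin_sub_interpolate hs hΨ hu.injective hx]
      exact hC x hx
  have hnodes : ∀ j, E (u j) = 0 := fun j => by
    simp only [E, Lagrange.eval_interpolate_at_node _ hu.injective.injOn (Finset.mem_univ j),
      sub_self]
  obtain ⟨Z, hcard, hZ, hZ0⟩ := exists_finset_derivWithin_eq_zero hE.continuousOn
    (Z := Finset.univ.image u)
    (fun z hz => by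
      obtain ⟨j, -, rfl⟩ := Finset.mem_image.1 hz
      exact ⟨hu.monotone (Fin.zero_le j), hu.monotone (Fin.le_last j)⟩)
    (by simpa using hnodes)
  replace hcard : n + 1 ≤ Z.card := by
    simpa [Finset.card_image_of_injective _ hu.injective] using hcard
  have hZ' := hZ.trans Ioo_subset_Icc_self
  refine (norm_integral_mul_cexp_le_of_eq_zero hαβ hκ (hE.of_le (by norm_cast; omega))
    (hnodes 0) (hnodes _)
    (fun x hx => abs_le_of_card_zeros_le hαβ hE₁ hZ' hcard hZ0 hE₁_bound hx)
    (fun x hx => abs_derivWithin_le_of_card_zeros_le hαβ hE₁ hZ' hcard hZ0 hE₁_bound hx)).trans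
    (le_of_eq ?_)
  rw [Nat.factorial_succ]
  push_cast
  field_simp
  ring

theorem norm_integral_sub_filonQ_le_of_subset {κ C A B : ℝ} (hκ : 0 < κ) {m : ℕ} (hm : 1 ≤ m)
    {Ψ : ℝ → ℝ} (hΨ : ContDiffOn ℝ (m + 1) Ψ (Icc A B))
    (hC : ∀ x ∈ Icc A B, |iteratedDerivWithin (m + 1) Ψ (Icc A B) x| ≤ C)
    {u : Fin (m + 1) → ℝ} (hu : StrictMono u) (hA : A ≤ u 0) (hB : u (Fin.last m) ≤ B) :
    ‖(∫ x in u 0..u (Fin.last m), (Ψ x : ℂ) * Complex.exp (Complex.I * κ * x))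
        - filonQ κ m id Ψ u‖
      ≤ (m + 2) * C * (u (Fin.last m) - u 0) ^ m / (m.factorial * κ ^ 2) := by
  have hαβ : u 0 < u (Fin.last m) := hu (Fin.lt_def.2 (by rw [Fin.val_zero, Fin.val_last]; omega))
  have hsub : Icc (u 0) (u (Fin.last m)) ⊆ Icc A B := Icc_subset_Icc hA hB
  refine norm_integral_sub_filonQ_le hκ hm hu (hΨ.mono hsub) fun x hx => ?_
  rw [iteratedDerivWithin_eq_of_subset hsub (uniqueDiffOn_Icc hαβ)
    (uniqueDiffOn_Icc (hA.trans_lt (hαβ.trans_le hB))) (by exact_mod_cast hΨ) hx]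
  exact hC x (hsub hx)

theorem oscInt_eq_integral {κ a b : ℝ} (hab : a < b) {f g Ψ : ℝ → ℝ}
    (hg : ContDiffOn ℝ 1 g (Icc a b)) (hgm : MonotoneOn g (Icc a b))
    (hΨ : ContinuousOn Ψ (Icc (g a) (g b)))
    (hf : ∀ x ∈ Icc a b, f x = derivWithin g (Icc a b) x * Ψ (g x)) :
    oscInt κ f g a b = ∫ u in g a..g b, (Ψ u : ℂ) * Complex.exp (Complex.I * κ * u) := by
  have huIcc : uIcc a b = Icc a b := uIcc_of_le hab.le
  have himg : g '' uIcc a b ⊆ Icc (g a) (g b) := by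
    rw [huIcc]
    rintro _ ⟨x, hx, rfl⟩
    exact ⟨hgm (left_mem_Icc.2 hab.le) hx hx.1, hgm hx (right_mem_Icc.2 hab.le) hx.2⟩
  have hgc : ContinuousOn g (uIcc a b) := huIcc ▸ hg.continuousOn
  rw [oscInt, ← intervalIntegral.integral_deriv_smul_comp'' hgc
    (f' := derivWithin g (Icc a b))
    (g := fun u : ℝ => (Ψ u : ℂ) * Complex.exp (Complex.I * κ * u)) (fun x hx => ?_)
    (huIcc ▸ hg.continuousOn_derivWithin (uniqueDiffOn_Icc hab) le_rfl)
    (ContinuousOn.mono ((Complex.continuous_ofReal.comp_continuousOn hΨ).mul (by fun_prop)) himg)]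
  · refine intervalIntegral.integral_congr fun x hx => ?_
    rw [huIcc] at hx
    simp only [Function.comp_apply, hf x hx, Complex.real_smul, Complex.ofReal_mul]
    ring
  · rw [min_eq_left hab.le, max_eq_right hab.le] at hx
    exact ((hg.differentiableOn one_ne_zero x (Ioo_subset_Icc_self hx)).hasDerivWithinAt.hasDerivAt
      (Icc_mem_nhds hx.1 hx.2)).hasDerivWithinAt

theorem strictMonoOn_Icc_of_derivWithin_pos {a b : ℝ} {g : ℝ → ℝ}
    (hg : ContinuousOn g (Icc a b)) (hg' : ∀ x ∈ Icc a b, 0 < derivWithin g (Icc a b) x) :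
    StrictMonoOn g (Icc a b) :=
  strictMonoOn_of_deriv_pos (convex_Icc a b) hg fun x hx => by
    rw [interior_Icc] at hx
    rw [← derivWithin_of_mem_nhds (Icc_mem_nhds hx.1 hx.2)]
    exact hg' x (Ioo_subset_Icc_self hx)

def uniformGrid (a b : ℝ) (N k : ℕ) : ℝ := a + (b - a) * k / N

section uniformGrid
variable {a b : ℝ} {N : ℕ}

theorem uniformGrid_zero : uniformGrid a b N 0 = a := by simp [uniformGrid]

theorem uniformGrid_self (hN : N ≠ 0) : uniformGrid a b N N = b := by
  have : (N : ℝ) ≠ 0 := Nat.cast_ne_zero.2 hN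
  simp [uniformGrid, this]

theorem uniformGrid_succ_sub (k : ℕ) :
    uniformGrid a b N (k + 1) - uniformGrid a b N k = (b - a) / N := by
  simp only [uniformGrid]
  push_cast
  ring

theorem monotone_uniformGrid (hab : a ≤ b) : Monotone (uniformGrid a b N) := fun i j hij => by
  simp only [uniformGrid]
  gcongr

theorem uniformGrid_mem_Icc (hab : a ≤ b) (hN : N ≠ 0) {k : ℕ} (hk : k ≤ N) :
    uniformGrid a b N k ∈ Icc a b := by
  constructor
  · simpa only [uniformGrid_zero] using monotone_uniformGrid (N := N) hab (Nat.zero_le k)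
  · simpa only [uniformGrid_self hN] using monotone_uniformGrid (N := N) hab hk

end uniformGrid

namespace FilonNodes
variable {a b : ℝ} {m N : ℕ} {t : Fin N → Fin (m + 1) → ℝ}

theorem apply_zero (ht : FilonNodes a b m N t) (l : Fin N) : t l 0 = uniformGrid a b N l :=
  (ht l).2.1

theorem apply_last (ht : FilonNodes a b m N t) (l : Fin N) :
    t l (Fin.last m) = uniformGrid a b N (l + 1) := by
  rw [(ht l).2.2, uniformGrid]
  push_cast
  ring

theorem mem_Icc (ht : FilonNodes a b m N t) (hab : a ≤ b) (l : Fin N) (j : Fin (m + 1)) :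
    t l j ∈ Icc a b := by
  have hN : N ≠ 0 := Fin.pos l |>.ne'
  constructor
  · calc a ≤ t l 0 := ht.apply_zero l ▸ (uniformGrid_mem_Icc hab hN l.is_le').1
      _ ≤ t l j := (ht l).1.monotone (Fin.zero_le j)
  · calc t l j ≤ t l (Fin.last m) := (ht l).1.monotone (Fin.le_last j)
      _ ≤ b := ht.apply_last l ▸ (uniformGrid_mem_Icc hab hN l.is_lt).2

end FilonNodes

theorem FilonNodes.norm_integral_sub_filonQ_le {a b κ σ C : ℝ} {m N : ℕ}
    {t : Fin N → Fin (m + 1) → ℝ} (ht : FilonNodes a b m N t) (hab : a < b) (hκ : 0 < κ)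
    (hm : 1 ≤ m) {g Ψ : ℝ → ℝ} (hg : ContDiffOn ℝ 1 g (Icc a b))
    (hgmono : StrictMonoOn g (Icc a b))
    (hσ : ∀ x ∈ Icc a b, |derivWithin g (Icc a b) x| ≤ σ)
    (hΨ : ContDiffOn ℝ (m + 1) Ψ (Icc (g a) (g b)))
    (hC : ∀ x ∈ Icc (g a) (g b), |iteratedDerivWithin (m + 1) Ψ (Icc (g a) (g b)) x| ≤ C)
    (l : Fin N) :
    ‖(∫ x in g (t l 0)..g (t l (Fin.last m)), (Ψ x : ℂ) * Complex.exp (Complex.I * κ * x))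
        - filonQ κ m g Ψ (t l)‖
      ≤ (m + 2) * C * (σ * (b - a) / N) ^ m / (m.factorial * κ ^ 2) := by
  have ha := left_mem_Icc.2 hab.le
  have hb := right_mem_Icc.2 hab.le
  have htab := ht.mem_Icc hab.le l
  have hu : StrictMono (g ∘ t l) := fun i j hij => hgmono (htab i) (htab j) ((ht l).1 hij)
  -- `filonQ κ m g Ψ (t l)` is definitionally `filonQ κ m id Ψ (g ∘ t l)`.
  refine (norm_integral_sub_filonQ_le_of_subset hκ hm hΨ hC hu
    (hgmono.monotoneOn ha (htab 0) (htab 0).1)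
    (hgmono.monotoneOn (htab _) hb (htab _).2)).trans ?_
  have hC₀ : 0 ≤ C := (abs_nonneg _).trans (hC _ ⟨le_rfl, hgmono.monotoneOn ha hb hab.le⟩)
  have hlen : t l (Fin.last m) - t l 0 = (b - a) / N := by
    rw [ht.apply_zero, ht.apply_last, uniformGrid_succ_sub]
  have hlip := Convex.norm_image_sub_le_of_norm_derivWithin_le
    (hg.differentiableOn one_ne_zero) hσ (convex_Icc a b) (htab 0) (htab (Fin.last m))
  rw [Real.norm_eq_abs, Real.norm_eq_abs, hlen,
    abs_of_nonneg (div_nonneg (sub_nonneg.2 hab.le) N.cast_nonneg)] at hlip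
  gcongr
  · exact sub_nonneg.2 (hu.monotone (Fin.zero_le _))
  · exact (le_abs_self _).trans (hlip.trans_eq (mul_div_assoc _ _ _).symm)

theorem norm_oscInt_sub_compFilonQ_le_natCast_mul {a b κ σ C : ℝ} (hab : a < b) (hκ : 0 < κ)
    {m N : ℕ} (hm : 1 ≤ m) (hN : 1 ≤ N) {f g Ψ : ℝ → ℝ} (hg : ContDiffOn ℝ 1 g (Icc a b))
    (hg' : ∀ x ∈ Icc a b, 0 < derivWithin g (Icc a b) x)
    (hσ : ∀ x ∈ Icc a b, |derivWithin g (Icc a b) x| ≤ σ)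
    (hΨdef : ∀ x ∈ Icc a b, Ψ (g x) = f x / derivWithin g (Icc a b) x)
    (hΨ : ContDiffOn ℝ (m + 1) Ψ (Icc (g a) (g b)))
    (hC : ∀ x ∈ Icc (g a) (g b), |iteratedDerivWithin (m + 1) Ψ (Icc (g a) (g b)) x| ≤ C)
    {t : Fin N → Fin (m + 1) → ℝ} (ht : FilonNodes a b m N t) :
    ‖oscInt κ f g a b - compFilonQ κ m N g Ψ t‖
      ≤ N * ((m + 2) * C * (σ * (b - a) / N) ^ m / (m.factorial * κ ^ 2)) := by
  have hgmono := strictMonoOn_Icc_of_derivWithin_pos hg.continuousOn hg'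
  have hN₀ : N ≠ 0 := by omega
  have hgy : ∀ k ≤ N, g (uniformGrid a b N k) ∈ Icc (g a) (g b) := fun k hk =>
    have hyk := uniformGrid_mem_Icc hab.le hN₀ hk
    ⟨hgmono.monotoneOn (left_mem_Icc.2 hab.le) hyk hyk.1,
      hgmono.monotoneOn hyk (right_mem_Icc.2 hab.le) hyk.2⟩
  have hΦ : ContinuousOn (fun x : ℝ => (Ψ x : ℂ) * Complex.exp (Complex.I * κ * x))
      (Icc (g a) (g b)) :=
    (Complex.continuous_ofReal.comp_continuousOn hΨ.continuousOn).mul (by fun_prop)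
  have hsplit : oscInt κ f g a b = ∑ l : Fin N,
      ∫ x in g (t l 0)..g (t l (Fin.last m)), (Ψ x : ℂ) * Complex.exp (Complex.I * κ * x) := by
    simp only [ht.apply_zero, ht.apply_last]
    rw [oscInt_eq_integral hab hg hgmono.monotoneOn hΨ.continuousOn fun x hx => by
        rw [hΨdef x hx, mul_div_cancel₀ _ (hg' x hx).ne'],
      Fin.sum_univ_eq_sum_range (fun k =>
        ∫ x in g (uniformGrid a b N k)..g (uniformGrid a b N (k + 1)), (Ψ x : ℂ) * Complex.exp (Complex.I * κ * x)) N,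
      intervalIntegral.sum_integral_adjacent_intervals fun k hk => ?_,
      uniformGrid_zero, uniformGrid_self hN₀]
    refine (hΦ.mono (Icc_subset_Icc (hgy k hk.le).1 (hgy (k + 1) hk).2)).intervalIntegrable_of_Icc
      (hgmono.monotoneOn (uniformGrid_mem_Icc hab.le hN₀ hk.le) (uniformGrid_mem_Icc hab.le hN₀ hk)
        (monotone_uniformGrid hab.le k.le_succ))
  rw [hsplit, compFilonQ, ← Finset.sum_sub_distrib]
  refine (norm_sum_le _ _).trans ?_
  simpa using Finset.sum_le_sum (s := Finset.univ) fun l _ =>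
    ht.norm_integral_sub_filonQ_le hab hκ hm hg hgmono hσ hΨ hC l

theorem norm_oscInt_sub_compFilonQ_le {a b κ σ C : ℝ} (hab : a < b) (hκ : 0 < κ) {m N : ℕ}
    (hm : 1 ≤ m) (hN : 1 ≤ N) {f g Ψ : ℝ → ℝ} (hg : ContDiffOn ℝ 1 g (Icc a b))
    (hg' : ∀ x ∈ Icc a b, 0 < derivWithin g (Icc a b) x)
    (hσ : ∀ x ∈ Icc a b, |derivWithin g (Icc a b) x| ≤ σ)
    (hΨdef : ∀ x ∈ Icc a b, Ψ (g x) = f x / derivWithin g (Icc a b) x)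
    (hΨ : ContDiffOn ℝ (m + 1) Ψ (Icc (g a) (g b)))
    (hC : ∀ x ∈ Icc (g a) (g b), |iteratedDerivWithin (m + 1) Ψ (Icc (g a) (g b)) x| ≤ C)
    {t : Fin N → Fin (m + 1) → ℝ} (ht : FilonNodes a b m N t) :
    ‖oscInt κ f g a b - compFilonQ κ m N g Ψ t‖
      ≤ 3 * ((m : ℝ) + 1) / (m.factorial * κ ^ 2 * (N : ℝ) ^ (m - 1))
        * C * σ ^ m * (b - a) ^ m := by
  have ha := left_mem_Icc.2 hab.le
  have hσ₀ : 0 ≤ σ := (abs_nonneg _).trans (hσ a ha)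
  have hC₀ : 0 ≤ C := (abs_nonneg _).trans (hC (g a) ⟨le_rfl,
    (strictMonoOn_Icc_of_derivWithin_pos hg.continuousOn hg').monotoneOn ha
      (right_mem_Icc.2 hab.le) hab.le⟩)
  calc _ ≤ _ := norm_oscInt_sub_compFilonQ_le_natCast_mul hab hκ hm hN hg hg' hσ hΨdef hΨ hC ht
    _ = ((m : ℝ) + 2) / (m.factorial * κ ^ 2 * (N : ℝ) ^ (m - 1)) * C * σ ^ m * (b - a) ^ m := by
      rw [div_pow, mul_pow, ← pow_sub_one_mul (by omega : m ≠ 0) (N : ℝ)]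
      field_simp
    _ ≤ _ := by gcongr; linarith

theorem stmt_0_general (a b : ℝ) (hab : a < b)
    (κ : ℝ) (hκ : 0 < κ) (m N : ℕ) (hm : 1 ≤ m) (hN : 1 ≤ N)
    (f g Ψ : ℝ → ℝ) (σ C : ℝ)
    (hg : ContDiffOn ℝ 1 g (Set.Icc a b))
    (hg' : ∀ x ∈ Set.Icc a b, 0 < derivWithin g (Set.Icc a b) x)
    (hσ : IsGreatest ((fun x => |derivWithin g (Set.Icc a b) x|) '' Set.Icc a b) σ)
    (hΨdef : ∀ x ∈ Set.Icc a b, Ψ (g x) = f x / derivWithin g (Set.Icc a b) x)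
    (hΨ : ContDiffOn ℝ (m+1) Ψ (Set.Icc (g a) (g b)))
    (hC : ∀ x ∈ Set.Icc (g a) (g b),
      |iteratedDerivWithin (m+1) Ψ (Set.Icc (g a) (g b)) x| ≤ C)
    (t : Fin N → Fin (m+1) → ℝ) (ht : FilonNodes a b m N t) :
    ‖oscInt κ f g a b - compFilonQ κ m N g Ψ t‖
      ≤ 3*((m:ℝ)+1) / ((m.factorial : ℝ) * κ^2 * (N:ℝ)^(m-1)) * C * σ^m * (b-a)^m
    ∧ (N = ⌈σ⌉₊ →
        ‖oscInt κ f g a b - compFilonQ κ m N g Ψ t‖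
          ≤ 3*((m:ℝ)+1) / ((m.factorial : ℝ) * κ^2) * C * σ * (b-a)^m) := by
  have ha : a ∈ Icc a b := left_mem_Icc.2 hab.le
  have hσ' : ∀ x ∈ Icc a b, |derivWithin g (Icc a b) x| ≤ σ := fun x hx => hσ.2 ⟨x, hx, rfl⟩
  have hσ₀ : 0 < σ := (abs_pos.2 (hg' a ha).ne').trans_le (hσ' a ha)
  have hC₀ : 0 ≤ C := (abs_nonneg _).trans (hC (g a) ⟨le_rfl,
    (strictMonoOn_Icc_of_derivWithin_pos hg.continuousOn hg').monotoneOn ha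
      (right_mem_Icc.2 hab.le) hab.le⟩)
  have hfirst := norm_oscInt_sub_compFilonQ_le hab hκ hm hN hg hg' hσ' hΨdef hΨ hC ht
  refine ⟨hfirst, fun hNσ => hfirst.trans ?_⟩
  have hσm : σ ^ m / (N : ℝ) ^ (m - 1) ≤ σ := by
    refine div_le_of_le_mul₀ (by positivity) hσ₀.le ?_
    rw [← mul_pow_sub_one (by omega : m ≠ 0) σ]
    exact mul_le_mul_of_nonneg_left (pow_le_pow_left₀ hσ₀.le (hNσ ▸ Nat.le_ceil σ) _) hσ₀.le
  calc _ = 3 * ((m : ℝ) + 1) / (m.factorial * κ ^ 2) * C * (σ ^ m / (N : ℝ) ^ (m - 1))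
        * (b - a) ^ m := by ring
    _ ≤ _ := by gcongr

/-- error bound for the composite moment-free Filon rule on `[a,b] ⊆ [0,1]`. -/
theorem stmt_0 (a b : ℝ) (hab : a < b) (hsub : Set.Icc a b ⊆ Set.Icc (0:ℝ) 1)
    (κ : ℝ) (hκ : 0 < κ) (m N : ℕ) (hm : 1 ≤ m) (hN : 1 ≤ N)
    (f g Ψ : ℝ → ℝ) (σ C : ℝ)
    (hf : ContinuousOn f (Set.Icc a b))
    (hg : ContDiffOn ℝ 1 g (Set.Icc a b))
    (hg' : ∀ x ∈ Set.Icc a b, 0 < derivWithin g (Set.Icc a b) x)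
    (hσ : IsGreatest ((fun x => |derivWithin g (Set.Icc a b) x|) '' Set.Icc a b) σ)
    (hΨdef : ∀ x ∈ Set.Icc a b, Ψ (g x) = f x / derivWithin g (Set.Icc a b) x)
    (hΨ : ContDiffOn ℝ (m+1) Ψ (Set.Icc (g a) (g b)))
    (hC : ∀ x ∈ Set.Icc (g a) (g b),
      |iteratedDerivWithin (m+1) Ψ (Set.Icc (g a) (g b)) x| ≤ C)
    (t : Fin N → Fin (m+1) → ℝ) (ht : FilonNodes a b m N t) :
    ‖oscInt κ f g a b - compFilonQ κ m N g Ψ t‖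
      ≤ 3*((m:ℝ)+1) / ((m.factorial : ℝ) * κ^2 * (N:ℝ)^(m-1)) * C * σ^m * (b-a)^m
    ∧ (N = ⌈σ⌉₊ →
        ‖oscInt κ f g a b - compFilonQ κ m N g Ψ t‖
          ≤ 3*((m:ℝ)+1) / ((m.factorial : ℝ) * κ^2) * C * σ * (b-a)^m) :=
  stmt_0_general a b hab κ hκ m N hm hN f g Ψ σ C hg hg' hσ hΨdef hΨ hC t ht
end
end

section
/- Let κ > 1, let n ∈ ℕ with n > 1, let m ∈ ℕ, and set η := max(1/κ, 1 − κ^{−1/(n−1)}). Suppose f ∈ C^{m+1}([0,1]) and g(x) = x for x ∈ [0,1]. Let x_0 = 0 and x_j = κ^{(j−1)/(n−1)−1} for j = 1, …, n, and N_j := 1 for each j. Then for the quadrature Q_{κ,n,m}[f,g] := Σ_{j=1}^n Q_{N_j,κ,m}^{[x_{j−1},x_j]}[f,g] one has |∫_0^1 f(x) e^{iκx} dx − Q_{κ,n,m}[f,g]| ≤ (3(m+1)/(m! κ²)) ‖f^{(m+1)}‖_∞ η^{m−1}. -/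
/-!
On each panel the Filon error is `∫ (f - p) e^{iκx}`, where `p` interpolates `f` at the panel's
nodes. Since `f - p` vanishes at both endpoints, two integrations by parts produce the factor
`κ⁻²` and leave only `(f - p)'` at the endpoints and `(f - p)''` on the panel. Repeated use of
Rolle's theorem gives the interpolation estimate
`|(f - p)^{(k)}| ≤ ‖f^{(m+1)}‖ h^{m+1-k} / (m+1-k)!` on a panel of width `h`, so the panel error is
at most `(m + 2) ‖f^{(m+1)}‖ h^m / (m! κ²)`. The graded mesh has total length `1` and steps at
most `η`, whence `∑ hⱼ^m ≤ η^(m-1)`.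
-/

open scoped BigOperators
open MeasureTheory

noncomputable section

open Set Polynomial Complex

section Rolle

variable {a b : ℝ}

theorem exists_finset_deriv_zeros {F F' : ℝ → ℝ}
    (hF : ∀ x ∈ Icc a b, HasDerivWithinAt F (F' x) (Icc a b) x)
    {Z : Finset ℝ} (hZ : ↑Z ⊆ Icc a b) (hZ0 : ∀ z ∈ Z, F z = 0) :
    ∃ Z' : Finset ℝ, ↑Z' ⊆ Icc a b ∧ (∀ z ∈ Z', F' z = 0) ∧ Z.card ≤ Z'.card + 1 := by
  have rolle : ∀ p : ℝ × ℝ, ∃ z, p.1 ∈ Z → p.2 ∈ Z → p.1 < p.2 → z ∈ Ioo p.1 p.2 ∧ F' z = 0 := by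
    rintro ⟨u, v⟩
    by_cases h : u ∈ Z ∧ v ∈ Z ∧ u < v
    · obtain ⟨hu, hv, huv⟩ := h
      have hsub : Icc u v ⊆ Icc a b := Icc_subset_Icc (hZ hu).1 (hZ hv).2
      obtain ⟨z, hz, hz'⟩ := exists_hasDerivAt_eq_zero huv
        (fun x hx => (hF x (hsub hx)).continuousWithinAt.mono hsub)
        ((hZ0 u hu).trans (hZ0 v hv).symm)
        (fun x hx => (hF x (hsub (Ioo_subset_Icc_self hx))).hasDerivAt
          (Icc_mem_nhds ((hZ hu).1.trans_lt hx.1) (hx.2.trans_le (hZ hv).2)))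
      exact ⟨z, fun _ _ _ => ⟨hz, hz'⟩⟩
    · exact ⟨0, fun hu hv huv => absurd ⟨hu, hv, huv⟩ h⟩
  choose ξ hξ using rolle
  have hpairs : ∀ z ∈ ((Z ×ˢ Z).filter fun p => p.1 < p.2).image ξ, z ∈ Icc a b ∧ F' z = 0 := by
    intro z hz
    obtain ⟨⟨u, v⟩, hp, rfl⟩ := Finset.mem_image.1 hz
    simp only [Finset.mem_filter, Finset.mem_product] at hp
    obtain ⟨hmem, hzero⟩ := hξ (u, v) hp.1.1 hp.1.2 hp.2
    exact ⟨Icc_subset_Icc (hZ hp.1.1).1 (hZ hp.1.2).2 (Ioo_subset_Icc_self hmem), hzero⟩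
  refine ⟨_, fun z hz => (hpairs z hz).1, fun z hz => (hpairs z hz).2, ?_⟩
  exact Finset.card_le_of_interleaved fun u hu v hv huv _ =>
    ⟨ξ (u, v), Finset.mem_image_of_mem _ (by simp [hu, hv, huv]), (hξ (u, v) hu hv huv).1⟩

theorem exists_finset_iterate_deriv_zeros {G : ℕ → ℝ → ℝ} (k : ℕ)
    (hG : ∀ i < k, ∀ x ∈ Icc a b, HasDerivWithinAt (G i) (G (i + 1) x) (Icc a b) x)
    {Z : Finset ℝ} (hZ : ↑Z ⊆ Icc a b) (hZ0 : ∀ z ∈ Z, G 0 z = 0) :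
    ∃ Z' : Finset ℝ, ↑Z' ⊆ Icc a b ∧ (∀ z ∈ Z', G k z = 0) ∧ Z.card ≤ Z'.card + k := by
  induction k with
  | zero => exact ⟨Z, hZ, hZ0, le_rfl⟩
  | succ k ih =>
    obtain ⟨Z₁, hZ₁, hZ₁0, hcard₁⟩ := ih fun i hi => hG i (by omega)
    obtain ⟨Z₂, hZ₂, hZ₂0, hcard₂⟩ := exists_finset_deriv_zeros (hG k (by omega)) hZ₁ hZ₁0
    exact ⟨Z₂, hZ₂, hZ₂0, by omega⟩

theorem exists_eq_iterate_div_factorial_mul_prod {G : ℕ → ℝ → ℝ} (r : ℕ)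
    (hG : ∀ i < r, ∀ x ∈ Icc a b, HasDerivWithinAt (G i) (G (i + 1) x) (Icc a b) x)
    {Z : Finset ℝ} (hZ : ↑Z ⊆ Icc a b) (hZ0 : ∀ z ∈ Z, G 0 z = 0) (hcard : Z.card = r)
    {y : ℝ} (hy : y ∈ Icc a b) (hyZ : y ∉ Z) :
    ∃ ξ ∈ Icc a b, G 0 y = G r ξ / r.factorial * ∏ z ∈ Z, (y - z) := by
  set Q : ℝ[X] := ∏ z ∈ Z, (X - C z)
  have hQeval : ∀ u, Q.eval u = ∏ z ∈ Z, (u - z) := fun u => by simp [Q, eval_prod]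
  have hQy : Q.eval y ≠ 0 := by
    rw [hQeval]
    exact Finset.prod_ne_zero_iff.2 fun z hz => sub_ne_zero.2 fun h => hyZ (h ▸ hz)
  have hQr : derivative^[r] Q = (r.factorial : ℝ[X]) := by
    subst hcard
    simpa using iterate_derivative_prod_X_sub_C (S := Z) le_rfl
  -- `H 0 = G 0 - lam * Q` vanishes on `insert y Z`, so `H r = G r - lam * r!` vanishes somewhere
  set lam := G 0 y / Q.eval y
  set H : ℕ → ℝ → ℝ := fun i u => G i u - lam * (derivative^[i] Q).eval u
  have hH : ∀ i < r, ∀ x ∈ Icc a b, HasDerivWithinAt (H i) (H (i + 1) x) (Icc a b) x := by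
    intro i hi x hx
    rw [show H (i + 1) x = G (i + 1) x - lam * (derivative (derivative^[i] Q)).eval x by
      simp only [H, Function.iterate_succ_apply']]
    exact (hG i hi x hx).sub (((derivative^[i] Q).hasDerivAt x).hasDerivWithinAt.const_mul lam)
  have hH0 : ∀ z ∈ insert y Z, H 0 z = 0 := by
    intro z hz
    rcases Finset.mem_insert.1 hz with rfl | hz
    · simp [H, lam, hQy]
    · simp [H, hZ0 z hz, hQeval, Finset.prod_eq_zero hz]
  obtain ⟨Z', hZ', hZ'0, hcard'⟩ := exists_finset_iterate_deriv_zeros r hH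
    (by rw [Finset.coe_insert]; exact insert_subset hy hZ) hH0
  obtain ⟨ξ, hξ⟩ : Z'.Nonempty := by
    rw [← Finset.card_pos]
    rw [Finset.card_insert_of_notMem hyZ] at hcard'
    omega
  have hHr := hZ'0 ξ hξ
  simp only [H, hQr, eval_natCast] at hHr
  refine ⟨ξ, hZ' hξ, ?_⟩
  rw [← hQeval, sub_eq_zero.1 hHr, mul_div_cancel_right₀ _ (by positivity), div_mul_cancel₀ _ hQy]

theorem abs_le_of_card_zeros {G : ℕ → ℝ → ℝ} {M : ℝ} (r : ℕ)
    (hG : ∀ i < r, ∀ x ∈ Icc a b, HasDerivWithinAt (G i) (G (i + 1) x) (Icc a b) x)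
    (hM : ∀ x ∈ Icc a b, |G r x| ≤ M)
    {Z : Finset ℝ} (hZ : ↑Z ⊆ Icc a b) (hZ0 : ∀ z ∈ Z, G 0 z = 0) (hcard : Z.card = r)
    {y : ℝ} (hy : y ∈ Icc a b) :
    |G 0 y| ≤ M * (b - a) ^ r / r.factorial := by
  have hM0 : 0 ≤ M := (abs_nonneg _).trans (hM y hy)
  have hba : 0 ≤ b - a := by linarith [hy.1, hy.2]
  by_cases hyZ : y ∈ Z
  · rw [hZ0 y hyZ, abs_zero]
    positivity
  obtain ⟨ξ, hξ, hGy⟩ := exists_eq_iterate_div_factorial_mul_prod r hG hZ hZ0 hcard hy hyZ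
  have hprod : |∏ z ∈ Z, (y - z)| ≤ (b - a) ^ r := by
    rw [Finset.abs_prod, ← hcard, ← Finset.prod_const]
    exact Finset.prod_le_prod (fun _ _ => abs_nonneg _) fun z hz =>
      Real.dist_le_of_mem_Icc hy (hZ hz)
  rw [hGy, abs_mul, abs_div, Nat.abs_cast, div_mul_eq_mul_div]
  gcongr
  exact hM ξ hξ

end Rolle

section Interpolation

variable {f : ℝ → ℝ} {s : Set ℝ} {m : ℕ}

theorem hasDerivWithinAt_iteratedDerivWithin_sub_eval (hs : UniqueDiffOn ℝ s)
    (hf : ContDiffOn ℝ (m + 1) f s) (p : ℝ[X]) {i : ℕ} (hi : i ≤ m) {x : ℝ} (hx : x ∈ s) :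
    HasDerivWithinAt (fun y => iteratedDerivWithin i f s y - (derivative^[i] p).eval y)
      (iteratedDerivWithin (i + 1) f s x - (derivative^[i + 1] p).eval x) s x := by
  have hi' : (i : WithTop ℕ∞) < m + 1 := by exact_mod_cast Nat.lt_succ_of_le hi
  have hderiv := ((hf.differentiableOn_iteratedDerivWithin hi' hs) x hx).hasDerivWithinAt
  rw [← iteratedDerivWithin_succ] at hderiv
  rw [Function.iterate_succ_apply']
  exact hderiv.sub ((derivative^[i] p).hasDerivAt x).hasDerivWithinAt

theorem abs_iteratedDerivWithin_sub_interpolate_le (hs : UniqueDiffOn ℝ s)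
    (hf : ContDiffOn ℝ (m + 1) f s) {a b M : ℝ} (habs : Icc a b ⊆ s)
    (hM : ∀ x ∈ Icc a b, |iteratedDerivWithin (m + 1) f s x| ≤ M)
    {t : Fin (m + 1) → ℝ} (ht : StrictMono t) (ht0 : t 0 = a) (htm : t (Fin.last m) = b)
    {k : ℕ} (hk : k ≤ m + 1) {y : ℝ} (hy : y ∈ Icc a b) :
    |iteratedDerivWithin k f s y -
        (derivative^[k] (Lagrange.interpolate Finset.univ t fun j => f (t j))).eval y| ≤
      M * (b - a) ^ (m + 1 - k) / (m + 1 - k).factorial := by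
  set p := Lagrange.interpolate Finset.univ t fun j => f (t j)
  set E : ℕ → ℝ → ℝ := fun i y => iteratedDerivWithin i f s y - (derivative^[i] p).eval y
  have hE : ∀ i < m + 1, ∀ x ∈ Icc a b, HasDerivWithinAt (E i) (E (i + 1) x) (Icc a b) x :=
    fun i hi x hx =>
      (hasDerivWithinAt_iteratedDerivWithin_sub_eval hs hf p (by omega) (habs hx)).mono habs
  -- the `m + 1` nodes are zeros of `E 0`, so `E k` keeps `m + 1 - k` zeros
  set nodes := Finset.univ.image t
  have hnodes : ↑nodes ⊆ Icc a b := by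
    intro z hz
    obtain ⟨i, -, rfl⟩ := Finset.mem_image.1 (Finset.mem_coe.1 hz)
    exact ⟨ht0 ▸ ht.monotone (Fin.zero_le i), htm ▸ ht.monotone (Fin.le_last i)⟩
  have hE0 : ∀ z ∈ nodes, E 0 z = 0 := by
    intro z hz
    obtain ⟨i, -, rfl⟩ := Finset.mem_image.1 hz
    simp only [E, iteratedDerivWithin_zero, Function.iterate_zero_apply, p,
      Lagrange.eval_interpolate_at_node _ ht.injective.injOn (Finset.mem_univ i), sub_self]
  obtain ⟨Z, hZ, hZ0, hcard⟩ :=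
    exists_finset_iterate_deriv_zeros k (fun i hi => hE i (by omega)) hnodes hE0
  rw [Finset.card_image_of_injective _ ht.injective, Finset.card_univ, Fintype.card_fin] at hcard
  obtain ⟨Z₀, hZ₀Z, hZ₀card⟩ := Finset.exists_subset_card_eq (show m + 1 - k ≤ Z.card by omega)
  have hp : derivative^[m + 1] p = 0 := by
    refine iterate_derivative_eq_zero ?_
    rcases eq_or_ne p 0 with hp0 | hp0
    · simp [hp0]
    · rw [natDegree_lt_iff_degree_lt hp0]
      have hdeg := Lagrange.degree_interpolate_lt (s := Finset.univ) (fun j => f (t j))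
        ht.injective.injOn
      rwa [Finset.card_univ, Fintype.card_fin] at hdeg
  have hkm : k + (m + 1 - k) = m + 1 := by omega
  simpa [E] using abs_le_of_card_zeros (G := fun i => E (k + i)) (m + 1 - k)
    (fun i hi x hx => hE (k + i) (by omega) x hx)
    (fun x hx => by simpa [E, hkm, hp] using hM x hx)
    ((Finset.coe_subset.2 hZ₀Z).trans hZ) (fun z hz => hZ0 z (hZ₀Z hz)) hZ₀card hy

end Interpolation

section OscillatoryIntegral

variable {a b κ : ℝ}

theorem norm_cexp_I_mul_mul (κ x : ℝ) : ‖exp (I * κ * x)‖ = 1 := by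
  rw [mul_assoc, ← ofReal_mul]
  exact norm_exp_I_mul_ofReal _

theorem intervalIntegrable_ofReal_mul_cexp {u : ℝ → ℝ} (hu : ContinuousOn u (uIcc a b)) :
    IntervalIntegrable (fun x => (u x : ℂ) * exp (I * κ * x)) MeasureTheory.volume a b :=
  ((continuous_ofReal.comp_continuousOn hu).mul
    (by fun_prop : Continuous fun x : ℝ => exp (I * κ * x)).continuousOn).intervalIntegrable

theorem integral_ofReal_mul_cexp_eq {u u' : ℝ → ℝ} (hκ : κ ≠ 0) (hab : a ≤ b)
    (hu : ∀ x ∈ Icc a b, HasDerivWithinAt u (u' x) (Icc a b) x) (hu' : ContinuousOn u' (Icc a b)) :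
    ∫ x in a..b, (u x : ℂ) * exp (I * κ * x) =
      ((u b : ℂ) * exp (I * κ * b) - (u a : ℂ) * exp (I * κ * a) -
        ∫ x in a..b, (u' x : ℂ) * exp (I * κ * x)) / (I * κ) := by
  have hc : I * (κ : ℂ) ≠ 0 := mul_ne_zero I_ne_zero (ofReal_ne_zero.2 hκ)
  have hv : ∀ x : ℝ, HasDerivAt (fun y : ℝ => exp (I * κ * y) / (I * κ)) (exp (I * κ * x)) x := by
    intro x
    have := (((hasDerivAt_id (x : ℂ)).const_mul (I * κ)).cexp.comp_ofReal).div_const (I * κ)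
    simpa [hc, mul_comm] using this
  rw [← uIcc_of_le hab] at hu hu'
  have hibp := intervalIntegral.integral_mul_deriv_eq_deriv_mul_of_hasDerivWithinAt
    (fun x hx => (hu x hx).ofReal_comp) (fun x _ => (hv x).hasDerivWithinAt)
    (continuous_ofReal.comp_continuousOn hu').intervalIntegrable
    ((by fun_prop : Continuous fun x : ℝ => exp (I * κ * x)).intervalIntegrable _ _)
  simp_rw [← mul_div_assoc] at hibp
  rw [hibp, intervalIntegral.integral_div]
  ring

theorem norm_integral_ofReal_mul_cexp_le {u u' u'' : ℝ → ℝ} {B₁ B₂ : ℝ} (hκ : κ ≠ 0) (hab : a ≤ b)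
    (hu : ∀ x ∈ Icc a b, HasDerivWithinAt u (u' x) (Icc a b) x)
    (hu' : ∀ x ∈ Icc a b, HasDerivWithinAt u' (u'' x) (Icc a b) x)
    (hu'' : ContinuousOn u'' (Icc a b)) (ha : u a = 0) (hb : u b = 0)
    (hB₁ : ∀ x ∈ Icc a b, |u' x| ≤ B₁) (hB₂ : ∀ x ∈ Icc a b, |u'' x| ≤ B₂) :
    ‖∫ x in a..b, (u x : ℂ) * exp (I * κ * x)‖ ≤ (2 * B₁ + (b - a) * B₂) / κ ^ 2 := by
  have hnorm : ∀ (v : ℝ → ℝ) (x : ℝ), ‖(v x : ℂ) * exp (I * κ * x)‖ = |v x| := fun v x => by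
    rw [norm_mul, norm_cexp_I_mul_mul, mul_one, norm_real, Real.norm_eq_abs]
  have hJ : ‖∫ x in a..b, (u'' x : ℂ) * exp (I * κ * x)‖ ≤ B₂ * (b - a) := by
    have := intervalIntegral.norm_integral_le_of_norm_le_const fun x hx =>
      (hnorm u'' x).trans_le (hB₂ x (Ioc_subset_Icc_self (uIoc_of_le hab ▸ hx)))
    rwa [abs_of_nonneg (sub_nonneg.2 hab)] at this
  have hboundary : ∀ x ∈ Icc a b, ‖(u' x : ℂ) * exp (I * κ * x)‖ ≤ B₁ := fun x hx =>
    (hnorm u' x).trans_le (hB₁ x hx)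
  have hnum : ‖(u' b : ℂ) * exp (I * κ * b) - (u' a : ℂ) * exp (I * κ * a) -
      ∫ x in a..b, (u'' x : ℂ) * exp (I * κ * x)‖ ≤ 2 * B₁ + (b - a) * B₂ := by
    refine (norm_sub_le _ _).trans ((add_le_add_left (norm_sub_le _ _) _).trans ?_)
    linarith [hboundary a (left_mem_Icc.2 hab), hboundary b (right_mem_Icc.2 hab)]
  have hu'c : ContinuousOn u' (Icc a b) := fun x hx => (hu' x hx).continuousWithinAt
  rw [integral_ofReal_mul_cexp_eq hκ hab hu hu'c, ha, hb,
    integral_ofReal_mul_cexp_eq hκ hab hu' hu'']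
  have hc : ‖I * (κ : ℂ)‖ = |κ| := by simp
  simp only [ofReal_zero, zero_mul, sub_self, zero_sub, norm_div, norm_neg, hc, div_div,
    ← sq, sq_abs]
  exact div_le_div_of_nonneg_right hnum (sq_nonneg κ)

end OscillatoryIntegral

theorem norm_oscInt_sub_filonQ_le {f : ℝ → ℝ} {s : Set ℝ} {m : ℕ} {a b κ M : ℝ} (hκ : κ ≠ 0)
    (hm : 1 ≤ m) (hs : UniqueDiffOn ℝ s) (hf : ContDiffOn ℝ (m + 1) f s) (hab : a ≤ b)
    (habs : Icc a b ⊆ s) (hM : ∀ x ∈ Icc a b, |iteratedDerivWithin (m + 1) f s x| ≤ M)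
    {t : Fin (m + 1) → ℝ} (ht : StrictMono t) (ht0 : t 0 = a) (htm : t (Fin.last m) = b) :
    ‖oscInt κ f (fun y => y) a b - filonQ κ m (fun y => y) f t‖ ≤
      (m + 2) * M / (m.factorial * κ ^ 2) * (b - a) ^ m := by
  set p := Lagrange.interpolate Finset.univ t fun j => f (t j)
  set E : ℕ → ℝ → ℝ := fun i y => iteratedDerivWithin i f s y - (derivative^[i] p).eval y
  have hE : ∀ i ≤ m, ∀ x ∈ Icc a b, HasDerivWithinAt (E i) (E (i + 1) x) (Icc a b) x :=
    fun i hi x hx => (hasDerivWithinAt_iteratedDerivWithin_sub_eval hs hf p hi (habs hx)).mono habs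
  have hbound : ∀ k ≤ m + 1, ∀ x ∈ Icc a b,
      |E k x| ≤ M * (b - a) ^ (m + 1 - k) / (m + 1 - k).factorial := fun k hk x hx =>
    abs_iteratedDerivWithin_sub_interpolate_le hs hf habs hM ht ht0 htm hk hx
  have hE0 : ∀ i, E 0 (t i) = 0 := fun i => by
    simp only [E, iteratedDerivWithin_zero, Function.iterate_zero_apply, p,
      Lagrange.eval_interpolate_at_node _ ht.injective.injOn (Finset.mem_univ i), sub_self]
  have hE2 : ContinuousOn (E 2) (Icc a b) :=
    ((hf.continuousOn_iteratedDerivWithin (by exact_mod_cast Nat.succ_le_succ hm) hs).mono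
      habs).sub (derivative^[2] p).continuous.continuousOn
  have herr : oscInt κ f (fun y => y) a b - filonQ κ m (fun y => y) f t =
      ∫ x in a..b, (E 0 x : ℂ) * exp (I * κ * x) := by
    rw [oscInt, filonQ, ht0, htm, ← intervalIntegral.integral_sub
      (intervalIntegrable_ofReal_mul_cexp (hf.continuousOn.mono (uIcc_of_le hab ▸ habs)))
      (intervalIntegrable_ofReal_mul_cexp p.continuous.continuousOn)]
    refine intervalIntegral.integral_congr fun x _ => ?_
    simp only [E, iteratedDerivWithin_zero, Function.iterate_zero_apply, p]
    push_cast
    ring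
  rw [herr]
  refine (norm_integral_ofReal_mul_cexp_le hκ hab (hE 0 (Nat.zero_le m)) (hE 1 hm) hE2
    (ht0 ▸ hE0 0) (htm ▸ hE0 (Fin.last m)) (hbound 1 (by omega)) (hbound 2 (by omega))).trans_eq ?_
  obtain ⟨n, rfl⟩ : ∃ n, m = n + 1 := ⟨m - 1, by omega⟩
  simp only [Nat.add_sub_cancel, show n + 1 + 1 - 2 = n by omega, Nat.factorial_succ]
  push_cast
  field_simp
  ring

theorem oscInt_eq_sum_range {f : ℝ → ℝ} {κ : ℝ} {x : ℕ → ℝ} {n : ℕ}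
    (hf : ∀ j < n, ContinuousOn f (uIcc (x j) (x (j + 1)))) :
    oscInt κ f (fun y => y) (x 0) (x n) =
      ∑ j ∈ Finset.range n, oscInt κ f (fun y => y) (x j) (x (j + 1)) :=
  (intervalIntegral.sum_integral_adjacent_intervals fun j hj =>
    intervalIntegrable_ofReal_mul_cexp (hf j hj)).symm

theorem sum_range_pow_sub_le {x : ℕ → ℝ} {n m : ℕ} {η : ℝ} (hm : 1 ≤ m)
    (hx : ∀ j < n, x j ≤ x (j + 1)) (hη : ∀ j < n, x (j + 1) - x j ≤ η) :
    ∑ j ∈ Finset.range n, (x (j + 1) - x j) ^ m ≤ η ^ (m - 1) * (x n - x 0) := by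
  rw [← Finset.sum_range_sub, Finset.mul_sum]
  refine Finset.sum_le_sum fun j hj => ?_
  have hj := Finset.mem_range.1 hj
  have h0 : 0 ≤ x (j + 1) - x j := sub_nonneg.2 (hx j hj)
  calc (x (j + 1) - x j) ^ m = (x (j + 1) - x j) ^ (m - 1) * (x (j + 1) - x j) := by
        rw [← pow_succ, Nat.sub_add_cancel hm]
    _ ≤ η ^ (m - 1) * (x (j + 1) - x j) := by gcongr; exact hη j hj

theorem rpow_neg_one_div_le_one {κ : ℝ} {n : ℕ} (hκ : 1 ≤ κ) (hn : 1 ≤ n) :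
    κ ^ (-(1 : ℝ) / ((n : ℝ) - 1)) ≤ 1 :=
  Real.rpow_le_one_of_one_le_of_nonpos hκ
    (div_nonpos_of_nonpos_of_nonneg (by norm_num) (sub_nonneg.2 (by exact_mod_cast hn)))

def IsGradedMesh (κ : ℝ) (n : ℕ) (x : ℕ → ℝ) : Prop :=
  x 0 = 0 ∧ ∀ j, 1 ≤ j → j ≤ n → x j = κ ^ (((j : ℝ) - 1) / ((n : ℝ) - 1) - 1)

namespace IsGradedMesh

variable {κ : ℝ} {n : ℕ} {x : ℕ → ℝ}

theorem apply_last (h : IsGradedMesh κ n x) (hn : 1 < n) : x n = 1 := by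
  have hn' : (n : ℝ) - 1 ≠ 0 := sub_ne_zero.2 (by exact_mod_cast hn.ne')
  rw [h.2 n (by omega) le_rfl, div_self hn', sub_self, Real.rpow_zero]

theorem apply_one (h : IsGradedMesh κ n x) (hn : 1 < n) : x 1 = 1 / κ := by
  rw [h.2 1 le_rfl hn.le]
  norm_num [Real.rpow_neg_one]

theorem nonneg (h : IsGradedMesh κ n x) (hκ : 0 < κ) {j : ℕ} (hj : j ≤ n) : 0 ≤ x j := by
  rcases Nat.eq_zero_or_pos j with rfl | hj1
  · exact h.1.ge
  · rw [h.2 j hj1 hj]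
    positivity

theorem le_one (h : IsGradedMesh κ n x) (hκ : 1 ≤ κ) (hn : 1 < n) {j : ℕ} (hj : j ≤ n) :
    x j ≤ 1 := by
  rcases Nat.eq_zero_or_pos j with rfl | hj1
  · exact h.1.trans_le zero_le_one
  · rw [h.2 j hj1 hj]
    refine Real.rpow_le_one_of_one_le_of_nonpos hκ ?_
    have hn' : (0 : ℝ) < n - 1 := sub_pos.2 (by exact_mod_cast hn)
    rw [sub_nonpos, div_le_one hn']
    have : (j : ℝ) ≤ n := by exact_mod_cast hj
    linarith

theorem eq_succ_mul (h : IsGradedMesh κ n x) (hκ : 0 < κ) (hn : 1 < n) {j : ℕ} (hj1 : 1 ≤ j)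
    (hj : j < n) : x j = x (j + 1) * κ ^ (-(1 : ℝ) / ((n : ℝ) - 1)) := by
  have hn' : (n : ℝ) - 1 ≠ 0 := sub_ne_zero.2 (by exact_mod_cast hn.ne')
  rw [h.2 j hj1 hj.le, h.2 (j + 1) (by omega) hj, ← Real.rpow_add hκ]
  congr 1
  push_cast
  field_simp
  ring

theorem le_succ (h : IsGradedMesh κ n x) (hκ : 1 ≤ κ) (hn : 1 < n) {j : ℕ} (hj : j < n) :
    x j ≤ x (j + 1) := by
  rcases Nat.eq_zero_or_pos j with rfl | hj1
  · exact h.1.trans_le (h.nonneg (by linarith) hj)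
  · rw [h.eq_succ_mul (by linarith) hn hj1 hj]
    exact mul_le_of_le_one_right (h.nonneg (by linarith) hj) (rpow_neg_one_div_le_one hκ hn.le)

theorem succ_sub_le (h : IsGradedMesh κ n x) (hκ : 1 ≤ κ) (hn : 1 < n) {j : ℕ} (hj : j < n) :
    x (j + 1) - x j ≤ max (1 / κ) (1 - κ ^ (-(1 : ℝ) / ((n : ℝ) - 1))) := by
  rcases Nat.eq_zero_or_pos j with rfl | hj1
  · rw [h.apply_one hn, h.1, sub_zero]
    exact le_max_left _ _
  · calc x (j + 1) - x j = x (j + 1) * (1 - κ ^ (-(1 : ℝ) / ((n : ℝ) - 1))) := by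
          rw [h.eq_succ_mul (by linarith) hn hj1 hj]; ring
      _ ≤ 1 - κ ^ (-(1 : ℝ) / ((n : ℝ) - 1)) :=
          mul_le_of_le_one_left (sub_nonneg.2 (rpow_neg_one_div_le_one hκ hn.le))
            (h.le_one hκ hn hj)
      _ ≤ _ := le_max_right _ _

theorem sum_pow_sub_le (h : IsGradedMesh κ n x) (hκ : 1 ≤ κ) (hn : 1 < n) {m : ℕ} (hm : 1 ≤ m) :
    ∑ j ∈ Finset.range n, (x (j + 1) - x j) ^ m ≤
      max (1 / κ) (1 - κ ^ (-(1 : ℝ) / ((n : ℝ) - 1))) ^ (m - 1) := by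
  simpa [h.apply_last hn, h.1] using
    sum_range_pow_sub_le (x := x) (n := n) hm (fun j hj => h.le_succ hκ hn hj)
      (fun j hj => h.succ_sub_le hκ hn hj)

end IsGradedMesh

/-- error bound for the composite moment-free Filon rule with the linear
oscillator `g(x) = x` on the graded partition `x_0 = 0`, `x_j = κ^{(j-1)/(n-1)-1}`,
with `N_j = 1` on each subinterval. -/
theorem stmt_2 (κ : ℝ) (hκ : 1 < κ) (n m : ℕ) (hn : 1 < n) (hm : 1 ≤ m)
    (f : ℝ → ℝ) (C : ℝ)
    (hf : ContDiffOn ℝ (m+1) f (Set.Icc 0 1))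
    (hC : ∀ x ∈ Set.Icc (0:ℝ) 1,
      |iteratedDerivWithin (m+1) f (Set.Icc 0 1) x| ≤ C)
    (x : ℕ → ℝ) (hx0 : x 0 = 0)
    (hxj : ∀ j, 1 ≤ j → j ≤ n → x j = κ ^ (((j:ℝ)-1)/((n:ℝ)-1) - 1))
    (t : Fin n → Fin 1 → Fin (m+1) → ℝ)
    (ht : ∀ j : Fin n, FilonNodes (x j.val) (x (j.val+1)) m 1 (t j)) :
    ‖oscInt κ f (fun y => y) 0 1 -
        ∑ j : Fin n, compFilonQ κ m 1 (fun y => y) f (t j)‖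
      ≤ 3*((m:ℝ)+1) / ((m.factorial : ℝ) * κ^2) * C *
          (max (1/κ) (1 - κ ^ (-(1:ℝ)/((n:ℝ)-1))))^(m-1) := by
  have hmesh : IsGradedMesh κ n x := ⟨hx0, hxj⟩
  have hpanel : ∀ j < n, Icc (x j) (x (j + 1)) ⊆ Icc 0 1 := fun j hj =>
    Icc_subset_Icc (hmesh.nonneg (by linarith) hj.le) (hmesh.le_one hκ.le hn hj)
  have hcont : ∀ j < n, ContinuousOn f (uIcc (x j) (x (j + 1))) := fun j hj => by
    rw [uIcc_of_le (hmesh.le_succ hκ.le hn hj)]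
    exact hf.continuousOn.mono (hpanel j hj)
  set K := (m + 2) * C / (m.factorial * κ ^ 2)
  have herr : ∀ j : Fin n, ‖oscInt κ f (fun y => y) (x j) (x (j + 1)) -
      compFilonQ κ m 1 (fun y => y) f (t j)‖ ≤ K * (x (j + 1) - x j) ^ m := by
    intro j
    obtain ⟨hmono, h0, hlast⟩ := ht j 0
    simp only [compFilonQ, Fin.sum_univ_one]
    exact norm_oscInt_sub_filonQ_le (by linarith) hm (uniqueDiffOn_Icc zero_lt_one) hf
      (hmesh.le_succ hκ.le hn j.isLt) (hpanel j j.isLt) (fun y hy => hC y (hpanel j j.isLt hy))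
      hmono (by simpa using h0) (by simpa using hlast)
  have hC0 : 0 ≤ C := (abs_nonneg _).trans (hC 0 (left_mem_Icc.2 zero_le_one))
  have hK : K ≤ 3 * ((m : ℝ) + 1) / ((m.factorial : ℝ) * κ ^ 2) * C := by
    rw [div_mul_eq_mul_div]
    gcongr ?_ / _
    nlinarith
  calc ‖oscInt κ f (fun y => y) 0 1 - ∑ j : Fin n, compFilonQ κ m 1 (fun y => y) f (t j)‖
      = ‖∑ j : Fin n, (oscInt κ f (fun y => y) (x j) (x (j + 1)) -
          compFilonQ κ m 1 (fun y => y) f (t j))‖ := by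
        rw [← hx0, ← hmesh.apply_last hn, oscInt_eq_sum_range hcont, Finset.sum_sub_distrib,
          Fin.sum_univ_eq_sum_range (fun j => oscInt κ f (fun y => y) (x j) (x (j + 1)))]
    _ ≤ ∑ j : Fin n, K * (x (j + 1) - x j) ^ m :=
        (norm_sum_le _ _).trans (Finset.sum_le_sum fun j _ => herr j)
    _ ≤ K * max (1 / κ) (1 - κ ^ (-(1 : ℝ) / ((n : ℝ) - 1))) ^ (m - 1) := by
        rw [Fin.sum_univ_eq_sum_range (fun j => K * (x (j + 1) - x j) ^ m), ← Finset.mul_sum]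
        gcongr
        exact hmesh.sum_pow_sub_le hκ.le hn hm
    _ ≤ _ := by gcongr

end
end

section
/- There exists a positive constant c such that for all real κ > 1, all n ∈ ℕ satisfying (n−1)(ln(n−2+e) − 1) ≥ ln κ, and all integers j with 2 ≤ j ≤ n, one has (κ^{1/(n−1)} − 1)^{m_j−2}/(m_j−2)! ≤ c (n−2)^{−1/2}, where m_j := ⌈n(n−1)/(n+1−j)⌉. -/
/-!
Put `x = κ^{1/(n-1)} - 1` and `N = n - 2`. The hypothesis on `κ` says exactly that
`κ^{1/(n-1)} ≤ (N + e)/e`, i.e. `x ≤ N/e`, and `m_j ≥ n`, i.e. `m_j - 2 ≥ N`. Since `b^k/k!`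
decreases in `k` as soon as `k + 1 ≥ b`, the left-hand side is at most `(N/e)^N/N!`, which
Stirling's lower bound `N! ≥ √(2πN) (N/e)^N` bounds by `1/√(2πN)`.
-/

open Real Nat

lemma pow_div_factorial_le_of_le {b : ℝ} {N k : ℕ} (hb : 0 ≤ b) (hbN : b ≤ N + 1)
    (hNk : N ≤ k) : b ^ k / k ! ≤ b ^ N / N ! := by
  induction k, hNk using Nat.le_induction with
  | base => rfl
  | succ k hNk ih =>
    have hstep : b ^ (k + 1) / (k + 1)! = b ^ k / k ! * (b / (k + 1)) := by
      rw [pow_succ, factorial_succ, cast_mul, cast_succ]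
      field_simp
    have hratio : b / (k + 1) ≤ 1 := by
      have : (N : ℝ) ≤ k := by exact_mod_cast hNk
      rw [div_le_one (by positivity)]
      linarith
    calc b ^ (k + 1) / (k + 1)! = b ^ k / k ! * (b / (k + 1)) := hstep
      _ ≤ b ^ k / k ! := mul_le_of_le_one_right (by positivity) hratio
      _ ≤ b ^ N / N ! := ih

lemma pow_div_factorial_le_inv_sqrt {N : ℕ} (hN : N ≠ 0) :
    ((N : ℝ) / exp 1) ^ N / N ! ≤ (√(2 * π * N))⁻¹ := by
  rw [div_le_iff₀ (by positivity), ← div_eq_inv_mul, le_div_iff₀ (by positivity), mul_comm]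
  exact Stirling.le_factorial_stirling N

lemma rpow_one_div_le_div_exp_one {κ p y : ℝ} (hκ : 0 < κ) (hp : 0 < p) (hy : 0 < y)
    (h : log κ ≤ p * (log y - 1)) : κ ^ (1 / p) ≤ y / exp 1 :=
  calc κ ^ (1 / p) = exp (log κ / p) := by rw [rpow_def_of_pos hκ, mul_one_div]
    _ ≤ exp (log y - 1) := exp_le_exp.mpr ((div_le_iff₀' hp).mpr h)
    _ = y / exp 1 := by rw [exp_sub, exp_log hy]

lemma le_ceil_mul_sub_one_div {n j : ℕ} (hj : 2 ≤ j) (hjn : j ≤ n) :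
    n ≤ ⌈(n : ℝ) * (n - 1) / (n + 1 - j)⌉₊ := by
  have hj' : (2 : ℝ) ≤ j := by exact_mod_cast hj
  have hjn' : (j : ℝ) ≤ n := by exact_mod_cast hjn
  have hle : (n : ℝ) ≤ n * (n - 1) / (n + 1 - j) := by
    rw [le_div_iff₀ (by linarith)]
    nlinarith
  exact_mod_cast hle.trans (Nat.le_ceil _)

lemma three_le_of_log_le {κ : ℝ} {n : ℕ} (hκ : 1 < κ) (hn : 2 ≤ n)
    (h : log κ ≤ ((n : ℝ) - 1) * (log ((n : ℝ) - 2 + exp 1) - 1)) : 3 ≤ n := by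
  rcases hn.eq_or_lt with rfl | hn
  · norm_num at h
    linarith [log_pos hκ]
  · exact hn

/-- with `m_j = ⌈n(n-1)/(n+1-j)⌉`, there is a constant `c > 0` such that for
all `κ > 1` and `n` with `(n-1)(ln(n-2+e) - 1) ≥ ln κ`, and all `2 ≤ j ≤ n`,
`(κ^{1/(n-1)} - 1)^{m_j-2}/(m_j-2)! ≤ c (n-2)^{-1/2}`. -/
theorem stmt_4 :
    ∃ c : ℝ, 0 < c ∧ ∀ (κ : ℝ) (n : ℕ), 1 < κ →
      Real.log κ ≤ ((n:ℝ)-1) * (Real.log ((n:ℝ)-2+Real.exp 1) - 1) →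
      ∀ j : ℕ, 2 ≤ j → j ≤ n →
        (κ ^ ((1:ℝ)/((n:ℝ)-1)) - 1) ^ (⌈((n:ℝ)*((n:ℝ)-1))/((n:ℝ)+1-(j:ℝ))⌉₊ - 2) /
            ((Nat.factorial (⌈((n:ℝ)*((n:ℝ)-1))/((n:ℝ)+1-(j:ℝ))⌉₊ - 2) : ℝ))
          ≤ c * ((n:ℝ)-2) ^ (-(1:ℝ)/2) := by
  refine ⟨(√(2 * π))⁻¹, by positivity, fun κ n hκ hlog j hj hjn => ?_⟩
  have hn : 3 ≤ n := three_le_of_log_le hκ (hj.trans hjn) hlog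
  set m := ⌈((n:ℝ)*((n:ℝ)-1))/((n:ℝ)+1-(j:ℝ))⌉₊
  set N := n - 2 with hN
  have hNcast : (N : ℝ) = n - 2 := by rw [hN, Nat.cast_sub (by omega)]; norm_num
  have hNpos : (0 : ℝ) < N := Nat.cast_pos.mpr (by omega)
  have hroot : κ ^ ((1:ℝ)/((n:ℝ)-1)) ≤ (N + exp 1) / exp 1 :=
    rpow_one_div_le_div_exp_one (by linarith) (by linarith) (by positivity)
      (by rwa [hNcast])
  have hx0 : 0 ≤ κ ^ ((1:ℝ)/((n:ℝ)-1)) - 1 :=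
    sub_nonneg.mpr (one_le_rpow hκ.le (div_nonneg zero_le_one (by linarith)))
  have hx : κ ^ ((1:ℝ)/((n:ℝ)-1)) - 1 ≤ N / exp 1 := by
    rw [add_div, div_self (exp_pos 1).ne'] at hroot
    linarith
  have hNm : N ≤ m - 2 := by
    have := le_ceil_mul_sub_one_div hj hjn
    omega
  have hbN : (N : ℝ) / exp 1 ≤ N + 1 :=
    (div_le_self hNpos.le (one_le_exp zero_le_one)).trans (le_add_of_nonneg_right zero_le_one)
  calc _ ≤ ((N : ℝ) / exp 1) ^ (m - 2) / (m - 2)! := by gcongr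
    _ ≤ ((N : ℝ) / exp 1) ^ N / N ! := pow_div_factorial_le_of_le (by positivity) hbN hNm
    _ ≤ (√(2 * π * N))⁻¹ := pow_div_factorial_le_inv_sqrt (by omega)
    _ = (√(2 * π))⁻¹ * ((n:ℝ)-2) ^ (-(1:ℝ)/2) := by
      rw [← hNcast, neg_div, rpow_neg hNpos.le, ← sqrt_eq_rpow, sqrt_mul (by positivity),
        mul_inv]
end

section
/- Let r ≥ 0 be an integer and m ∈ ℕ. If g ∈ C^{2m}([0,1]) satisfies Assumption A(r), then there exists a positive constant c (depending on g and m but not on κ) such that for all κ > 1 and all integers j with 0 ≤ j ≤ 2m, sup_{x∈[0,1]} |w_κ^{(j)}(x)| ≤ c, where w_κ(x) := exp(iκ g(λ_r x)). -/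
open scoped BigOperators

noncomputable section

/-- `κ_{σ(r)} := κ` if `σ(r) ≤ 1`, and `κ σ(r)` otherwise. -/
def kappaSigma (κ σr : ℝ) : ℝ := if σr ≤ 1 then κ else κ * σr

/-- `λ_r := κ_{σ(r)}^{-1/(r+1)}`. -/
def lambdaR (κ σr : ℝ) (r : ℕ) : ℝ := (kappaSigma κ σr) ^ (-(1:ℝ)/((r:ℝ)+1))

open Set

/-!
Write `w_κ = exp (i h_κ)` with the real phase `h_κ(y) = κ g(λ_r y)`, whose `i`-th derivative is
`κ λ_r^i g^{(i)}(λ_r y)`, and note that `κ λ_r^(r+1) ≤ 1` by the choice of `λ_r`. For `i ≤ r + 1`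
the vanishing of `g, …, g^{(r)}` at `0` gives `|g^{(i)}(y)| ≤ M y^(r+1-i)` with
`M = sup |g^{(r+1)}|`, so this derivative is at most `M κ λ_r^(r+1) ≤ M`; for `i > r + 1` it is at
most `κ λ_r^i ‖g^{(i)}‖ ≤ ‖g^{(i)}‖` because `λ_r ≤ 1`. All derivatives of `exp` have modulus one
on the imaginary axis, so Faà di Bruno's formula bounds the `j`-th derivative of `w_κ` by
`j! D^j`, with `D` independent of `κ`.
-/

theorem Complex.norm_iteratedFDeriv_real_exp (n : ℕ) (z : ℂ) :
    ‖iteratedFDeriv ℝ n Complex.exp z‖ = Real.exp z.re := by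
  rw [← (Complex.contDiff_exp (𝕜 := ℂ) (n := n)).contDiffAt.restrictScalars_iteratedFDeriv (𝕜 := ℝ),
    Function.comp_apply, ContinuousMultilinearMap.norm_restrictScalars,
    norm_iteratedFDeriv_eq_norm_iteratedDeriv, iteratedDeriv_eq_iterate, Complex.iter_deriv_exp,
    Complex.norm_exp]

theorem norm_iteratedFDerivWithin_const_mul_ofReal {f : ℝ → ℝ} {s : Set ℝ} {x : ℝ} {n : ℕ}
    (c : ℂ) (hf : ContDiffOn ℝ n f s) (hs : UniqueDiffOn ℝ s) (hx : x ∈ s) :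
    ‖iteratedFDerivWithin ℝ n (fun y => c * (f y : ℂ)) s x‖
      = ‖c‖ * |iteratedDerivWithin n f s x| := by
  rw [norm_iteratedFDerivWithin_eq_norm_iteratedDerivWithin, iteratedDerivWithin_const_mul_field,
    norm_mul, ← Real.norm_eq_abs, ← norm_iteratedFDerivWithin_eq_norm_iteratedDerivWithin,
    ← norm_iteratedFDerivWithin_eq_norm_iteratedDerivWithin,
    ← Complex.ofRealLI.norm_iteratedFDerivWithin_comp_left (hf x hx) hs hx le_rfl]
  rfl

theorem ContDiffOn.exists_bound_iteratedDerivWithin {F : Type*} [NormedAddCommGroup F]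
    [NormedSpace ℝ F] {f : ℝ → F} {s : Set ℝ} {n : ℕ} (hf : ContDiffOn ℝ n f s)
    (hs : UniqueDiffOn ℝ s) (hK : IsCompact s) :
    ∃ C, ∀ i ≤ n, ∀ x ∈ s, ‖iteratedDerivWithin i f s x‖ ≤ C := by
  induction n with
  | zero =>
    obtain ⟨C, hC⟩ :=
      hK.exists_bound_of_continuousOn (hf.continuousOn_iteratedDerivWithin le_rfl hs)
    exact ⟨C, fun i hi => by rwa [Nat.le_zero.mp hi]⟩
  | succ n ih =>
    obtain ⟨C₁, hC₁⟩ := ih (hf.of_le (by norm_cast; omega))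
    obtain ⟨C₂, hC₂⟩ :=
      hK.exists_bound_of_continuousOn (hf.continuousOn_iteratedDerivWithin le_rfl hs)
    refine ⟨max C₁ C₂, fun i hi x hx => ?_⟩
    rcases Nat.of_le_succ hi with hi | rfl
    · exact (hC₁ i hi x hx).trans (le_max_left _ _)
    · exact (hC₂ x hx).trans (le_max_right _ _)

theorem norm_iteratedDerivWithin_cexp_I_mul_le {h : ℝ → ℝ} {s : Set ℝ} {x D : ℝ} {n : ℕ}
    (hh : ContDiffOn ℝ n h s) (hs : UniqueDiffOn ℝ s) (hx : x ∈ s)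
    (hD : ∀ i, 1 ≤ i → i ≤ n → |iteratedDerivWithin i h s x| ≤ D ^ i) :
    ‖iteratedDerivWithin n (fun y => Complex.exp (Complex.I * h y)) s x‖ ≤ n.factorial * D ^ n := by
  have hphase : ContDiffOn ℝ n (fun y => Complex.I * (h y : ℂ)) s :=
    contDiffOn_const.mul (Complex.ofRealCLM.contDiff.comp_contDiffOn hh)
  rw [← norm_iteratedFDerivWithin_eq_norm_iteratedDerivWithin, ← mul_one (n.factorial : ℝ)]
  refine norm_iteratedFDerivWithin_comp_le (g := Complex.exp) Complex.contDiff_exp.contDiffOn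
    hphase le_rfl uniqueDiffOn_univ hs (mapsTo_univ _ _) hx (fun i _ => ?_) (fun i hi₁ hi => ?_)
  · simp [iteratedFDerivWithin_univ, Complex.norm_iteratedFDeriv_real_exp]
  · rw [norm_iteratedFDerivWithin_const_mul_ofReal _ (hh.of_le (by exact_mod_cast hi)) hs hx,
      Complex.norm_I, one_mul]
    exact hD i hi₁ hi

theorem abs_iteratedDerivWithin_le_mul_pow_of_vanishing {f : ℝ → ℝ} {a M : ℝ} {n : ℕ}
    (ha : 0 < a) (hf : ContDiffOn ℝ n f (Icc 0 a))
    (hf0 : ∀ j < n, iteratedDerivWithin j f (Icc 0 a) 0 = 0)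
    (hM : ∀ y ∈ Icc 0 a, |iteratedDerivWithin n f (Icc 0 a) y| ≤ M) :
    ∀ i ≤ n, ∀ y ∈ Icc 0 a, |iteratedDerivWithin i f (Icc 0 a) y| ≤ M * y ^ (n - i) := by
  suffices h : ∀ k ≤ n, ∀ y ∈ Icc 0 a, |iteratedDerivWithin (n - k) f (Icc 0 a) y| ≤ M * y ^ k by
    intro i hi y hy
    simpa [Nat.sub_sub_self hi] using h (n - i) (Nat.sub_le n i) y hy
  have hM0 : 0 ≤ M := (abs_nonneg _).trans (hM 0 ⟨le_rfl, ha.le⟩)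
  intro k
  induction k with
  | zero => simpa using hM
  | succ k ih =>
    intro hk y hy
    have hn : n - k = n - (k + 1) + 1 := by omega
    have hderiv : ∀ t ∈ Icc 0 y, HasDerivWithinAt (iteratedDerivWithin (n - (k + 1)) f (Icc 0 a))
        (iteratedDerivWithin (n - k) f (Icc 0 a) t) (Icc 0 y) t := by
      intro t ht
      have hta : t ∈ Icc 0 a := ⟨ht.1, ht.2.trans hy.2⟩
      rw [hn, iteratedDerivWithin_succ]
      refine ((hf.differentiableOn_iteratedDerivWithin ?_ (uniqueDiffOn_Icc ha) t hta)
        ).hasDerivWithinAt.mono (Icc_subset_Icc_right hy.2)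
      exact_mod_cast (by omega : n - (k + 1) < n)
    have hbound : ∀ t ∈ Icc 0 y, ‖iteratedDerivWithin (n - k) f (Icc 0 a) t‖ ≤ M * y ^ k :=
      fun t ht => (ih (by omega) t ⟨ht.1, ht.2.trans hy.2⟩).trans
        (mul_le_mul_of_nonneg_left (pow_le_pow_left₀ ht.1 ht.2 k) hM0)
    have := (convex_Icc 0 y).norm_image_sub_le_of_norm_hasDerivWithin_le hderiv hbound
      (left_mem_Icc.2 hy.1) (right_mem_Icc.2 hy.1)
    rwa [hf0 _ (by omega), sub_zero, sub_zero, Real.norm_eq_abs, Real.norm_eq_abs,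
      abs_of_nonneg hy.1, mul_assoc, ← pow_succ] at this

theorem one_le_kappaSigma {κ : ℝ} (σr : ℝ) (hκ : 1 ≤ κ) : 1 ≤ kappaSigma κ σr := by
  unfold kappaSigma
  split_ifs with hσ
  · exact hκ
  · nlinarith

theorem lambdaR_pos {κ : ℝ} (σr : ℝ) (r : ℕ) (hκ : 1 ≤ κ) : 0 < lambdaR κ σr r :=
  Real.rpow_pos_of_pos (zero_lt_one.trans_le (one_le_kappaSigma σr hκ)) _

theorem lambdaR_le_one {κ : ℝ} (σr : ℝ) (r : ℕ) (hκ : 1 ≤ κ) : lambdaR κ σr r ≤ 1 :=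
  Real.rpow_le_one_of_one_le_of_nonpos (one_le_kappaSigma σr hκ)
    (div_nonpos_of_nonpos_of_nonneg (by norm_num) (by positivity))

theorem lambdaR_pow_succ {κ : ℝ} (σr : ℝ) (r : ℕ) (hκ : 1 ≤ κ) :
    lambdaR κ σr r ^ (r + 1) = (kappaSigma κ σr)⁻¹ := by
  rw [lambdaR, ← Real.rpow_natCast, ← Real.rpow_mul (by linarith [one_le_kappaSigma σr hκ]),
    show -(1 : ℝ) / (r + 1) * ((r + 1 : ℕ) : ℝ) = -1 by push_cast; field_simp, Real.rpow_neg_one]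

theorem mul_lambdaR_pow_succ_le_one {κ : ℝ} (σr : ℝ) (r : ℕ) (hκ : 1 ≤ κ) :
    κ * lambdaR κ σr r ^ (r + 1) ≤ 1 := by
  rw [lambdaR_pow_succ σr r hκ, kappaSigma]
  split_ifs with hσ
  · rw [mul_inv_cancel₀ (by linarith)]
  · rw [mul_inv, ← mul_assoc, mul_inv_cancel₀ (by linarith), one_mul]
    exact inv_le_one_of_one_le₀ (by linarith)

theorem mapsTo_const_mul_Icc_zero_one {ℓ : ℝ} (hℓ0 : 0 ≤ ℓ) (hℓ1 : ℓ ≤ 1) :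
    MapsTo (ℓ * ·) (Icc (0 : ℝ) 1) (Icc 0 1) := fun _ hy =>
  ⟨mul_nonneg hℓ0 hy.1, mul_le_one₀ hℓ1 hy.1 hy.2⟩

theorem abs_iteratedDerivWithin_mul_comp_mul_le {g : ℝ → ℝ} {κ ℓ C x : ℝ} {i n : ℕ}
    (hg : ContDiffOn ℝ i g (Icc 0 1)) (hκ : 0 ≤ κ) (hℓ0 : 0 ≤ ℓ) (hℓ1 : ℓ ≤ 1)
    (hκℓ : κ * ℓ ^ n ≤ 1) (hC : ∀ y ∈ Icc 0 1, |iteratedDerivWithin i g (Icc 0 1) y| ≤ C)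
    (hvanish : i ≤ n → ∀ y ∈ Icc 0 1, |iteratedDerivWithin i g (Icc 0 1) y| ≤ C * y ^ (n - i))
    (hx : x ∈ Icc (0 : ℝ) 1) :
    |iteratedDerivWithin i (fun y => κ * g (ℓ * y)) (Icc 0 1) x| ≤ C := by
  have hmaps := mapsTo_const_mul_Icc_zero_one hℓ0 hℓ1
  have hℓx := hmaps hx
  have hC0 : 0 ≤ C := (abs_nonneg _).trans (hC 0 ⟨le_rfl, zero_le_one⟩)
  rw [iteratedDerivWithin_const_mul_field,
    iteratedDerivWithin_comp_const_smul hx (uniqueDiffOn_Icc one_pos) hg ℓ hmaps, smul_eq_mul,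
    abs_mul, abs_mul, abs_of_nonneg hκ, abs_of_nonneg (pow_nonneg hℓ0 i), ← mul_assoc]
  rcases le_or_gt i n with hi | hi
  · calc κ * ℓ ^ i * |iteratedDerivWithin i g (Icc 0 1) (ℓ * x)|
        ≤ κ * ℓ ^ i * (C * ℓ ^ (n - i)) := by
          gcongr
          refine (hvanish hi _ hℓx).trans (mul_le_mul_of_nonneg_left ?_ hC0)
          exact pow_le_pow_left₀ hℓx.1 (mul_le_of_le_one_right hℓ0 hx.2) _
      _ = C * (κ * (ℓ ^ i * ℓ ^ (n - i))) := by ring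
      _ = C * (κ * ℓ ^ n) := by rw [← pow_add, Nat.add_sub_cancel' hi]
      _ ≤ C := mul_le_of_le_one_right hC0 hκℓ
  · calc κ * ℓ ^ i * |iteratedDerivWithin i g (Icc 0 1) (ℓ * x)|
        ≤ κ * ℓ ^ n * C :=
          mul_le_mul (mul_le_mul_of_nonneg_left (pow_le_pow_of_le_one hℓ0 hℓ1 hi.le) hκ)
            (hC _ hℓx) (abs_nonneg _) (by positivity)
      _ ≤ C := mul_le_of_le_one_left hC0 hκℓ

theorem stmt_7_general (r m : ℕ) (g : ℝ → ℝ) (σr : ℝ)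
    (hg2m : ContDiffOn ℝ (2*m) g (Set.Icc 0 1))
    (hgr : ContDiffOn ℝ (r+1) g (Set.Icc 0 1))
    (hg0 : ∀ j ≤ r, iteratedDerivWithin j g (Set.Icc 0 1) 0 = 0) :
    ∃ c : ℝ, 0 < c ∧ ∀ κ : ℝ, 1 < κ → ∀ j ≤ 2*m, ∀ x ∈ Set.Icc (0:ℝ) 1,
      ‖iteratedDerivWithin j
          (fun y : ℝ => Complex.exp (Complex.I * κ * g (lambdaR κ σr r * y)))
          (Set.Icc 0 1) x‖ ≤ c := by
  have hs : UniqueDiffOn ℝ (Icc (0 : ℝ) 1) := uniqueDiffOn_Icc one_pos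
  have hgr' : ContDiffOn ℝ (r + 1 : ℕ) g (Icc 0 1) := by exact_mod_cast hgr
  obtain ⟨C₁, hC₁⟩ := hg2m.exists_bound_iteratedDerivWithin hs isCompact_Icc
  obtain ⟨C₂, hC₂⟩ := hgr'.exists_bound_iteratedDerivWithin hs isCompact_Icc
  have hvanish := abs_iteratedDerivWithin_le_mul_pow_of_vanishing one_pos hgr'
    (fun j hj => hg0 j (Nat.lt_succ_iff.mp hj)) (fun y hy => hC₂ (r + 1) le_rfl y hy)
  set D := max 1 (max C₁ C₂)
  have hC₁D : C₁ ≤ D := (le_max_left _ _).trans (le_max_right _ _)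
  have hC₂D : C₂ ≤ D := (le_max_right _ _).trans (le_max_right _ _)
  refine ⟨(2 * m).factorial * D ^ (2 * m), by positivity, fun κ hκ j hj x hx => ?_⟩
  have hℓ0 := (lambdaR_pos σr r hκ.le).le
  have hℓ1 := lambdaR_le_one σr r hκ.le
  have hphase : ∀ i ≤ 2 * m,
      |iteratedDerivWithin i (fun y => κ * g (lambdaR κ σr r * y)) (Icc 0 1) x| ≤ D :=
    fun i hi => abs_iteratedDerivWithin_mul_comp_mul_le (hg2m.of_le (by exact_mod_cast hi))
      (by linarith) hℓ0 hℓ1 (mul_lambdaR_pow_succ_le_one σr r hκ.le)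
      (fun y hy => (hC₁ i hi y hy).trans hC₁D)
      (fun hir y hy => (hvanish i hir y hy).trans
        (mul_le_mul_of_nonneg_right hC₂D (pow_nonneg hy.1 _))) hx
  have hw : (fun y : ℝ => Complex.exp (Complex.I * κ * g (lambdaR κ σr r * y)))
      = fun y => Complex.exp (Complex.I * ↑(κ * g (lambdaR κ σr r * y))) := by
    simp only [Complex.ofReal_mul, mul_assoc]
  have hcd : ContDiffOn ℝ j (fun y => κ * g (lambdaR κ σr r * y)) (Icc 0 1) :=
    contDiffOn_const.mul ((hg2m.of_le (by exact_mod_cast hj)).comp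
      (contDiffOn_const.mul contDiffOn_id) (mapsTo_const_mul_Icc_zero_one hℓ0 hℓ1))
  rw [hw]
  calc _ ≤ (j.factorial : ℝ) * D ^ j :=
        norm_iteratedDerivWithin_cexp_I_mul_le hcd hs hx fun i hi₁ hi =>
          (hphase i (hi.trans hj)).trans (le_self_pow₀ (le_max_left _ _) (by omega))
    _ ≤ (2 * m).factorial * D ^ (2 * m) := by
        gcongr
        exact le_max_left _ _

/-- if `g ∈ C^{2m}([0,1])` satisfies Assumption A(r), then all derivatives of
order `≤ 2m` of `w_κ(x) = exp(iκ g(λ_r x))` are bounded on `[0,1]` uniformly in `κ > 1`. -/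
theorem stmt_7 (r m : ℕ) (hm : 1 ≤ m) (g : ℝ → ℝ) (σr : ℝ)
    (hg2m : ContDiffOn ℝ (2*m) g (Set.Icc 0 1))
    (hgr : ContDiffOn ℝ (r+1) g (Set.Icc 0 1))
    (hmono : StrictMonoOn g (Set.Icc 0 1))
    (hnoinfl : ConvexOn ℝ (Set.Icc 0 1) g ∨ ConcaveOn ℝ (Set.Icc 0 1) g)
    (hg0 : ∀ j ≤ r, iteratedDerivWithin j g (Set.Icc 0 1) 0 = 0)
    (hgne : ∀ x ∈ Set.Icc (0:ℝ) 1, iteratedDerivWithin (r+1) g (Set.Icc 0 1) x ≠ 0)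
    (hσ : IsGreatest
      ((fun x => |iteratedDerivWithin (r+1) g (Set.Icc 0 1) x| / ((r+1).factorial : ℝ)) ''
        Set.Icc 0 1) σr) :
    ∃ c : ℝ, 0 < c ∧ ∀ κ : ℝ, 1 < κ → ∀ j ≤ 2*m, ∀ x ∈ Set.Icc (0:ℝ) 1,
      ‖iteratedDerivWithin j
          (fun y : ℝ => Complex.exp (Complex.I * κ * g (lambdaR κ σr r * y)))
          (Set.Icc 0 1) x‖ ≤ c :=
  stmt_7_general r m g σr hg2m hgr hg0
end
end

section
/- Let r ≥ 0 be an integer and suppose g satisfies Assumption A(r). Then for all n ∈ ℕ, all κ > 1 and all j ∈ {1, …, n}, q_j ≤ (r+1) κ_{σ(r)}^{r/(n(r+1))} σ(r)/δ(r), where x_j := κ_{σ(r)}^{(j/n−1)/(r+1)} for j = 0, …, n, M_j := max(|g'(x_{j−1})|, |g'(x_j)|) and q_j := M_j x_{j−1}/g(x_{j−1}). -/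
/-! Taylor expansion at `0`, where the first `r` derivatives of `g` vanish, gives
`g x = g⁽ʳ⁺¹⁾(ξ) x^(r+1) / (r+1)!` and `g' x = g⁽ʳ⁺¹⁾(η) x^r / r!`,
hence `δ x^(r+1) ≤ g x` and `|g' x| ≤ (r+1) σ x^r`. For nodes `x_{j-1} ≤ x_j` this bounds `q_j` by
`(r+1) (σ/δ) (x_j / x_{j-1})^r`, and the geometric grading of the nodes makes
`(x_j / x_{j-1})^r = κ_σ^(r/(n(r+1)))`. -/

open scoped BigOperators

noncomputable section

/-- Graded node `x_j := κσ^{((j/n)-1)/(r+1)}`. -/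
def nodeX (κσ : ℝ) (r n j : ℕ) : ℝ := κσ ^ ((((j:ℝ)/(n:ℝ)) - 1)/((r:ℝ)+1))

open Set Nat

theorem iteratedDerivWithin_Icc_eq_of_lt {f : ℝ → ℝ} {m : ℕ} {a b c y : ℝ} (hcb : c ≤ b)
    (hy : y < c) :
    iteratedDerivWithin m f (Icc a c) y = iteratedDerivWithin m f (Icc a b) y := by
  have hnear : Icc a c =ᶠ[nhds y] Icc a b := by
    rw [Filter.eventuallyEq_set]
    filter_upwards [Iio_mem_nhds hy] with z hz
    exact ⟨fun h => ⟨h.1, hz.le.trans hcb⟩, fun h => ⟨h.1, hz.le⟩⟩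
  simp only [iteratedDerivWithin, iteratedFDerivWithin_congr_set hnear]

theorem exists_eq_iteratedDerivWithin_mul_pow_of_flat {f : ℝ → ℝ} {m : ℕ} {a b x : ℝ}
    (hf : ContDiffOn ℝ (m + 1) f (Icc a b))
    (hflat : ∀ k ≤ m, iteratedDerivWithin k f (Icc a b) a = 0) (hx : x ∈ Ioc a b) :
    ∃ ξ ∈ Ioo a x,
      f x = iteratedDerivWithin (m + 1) f (Icc a b) ξ * (x - a) ^ (m + 1) / (m + 1)! := by
  obtain ⟨hax, hxb⟩ := hx
  have hsmooth : ContDiffOn ℝ (m + 1) f (Icc a x) := hf.mono (Icc_subset_Icc_right hxb)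
  obtain ⟨ξ, hξ, hTaylor⟩ := taylor_mean_remainder_lagrange hax.ne
    (by rw [uIcc_of_le hax.le]; exact hsmooth.of_le (by exact_mod_cast m.le_succ))
    (by
      rw [uIcc_of_le hax.le, uIoo_of_le hax.le]
      exact (hsmooth.differentiableOn_iteratedDerivWithin (by exact_mod_cast m.lt_succ_self)
        (uniqueDiffOn_Icc hax)).mono Ioo_subset_Icc_self)
  rw [uIoo_of_le hax.le] at hξ
  have hpoly : taylorWithinEval f m (uIcc a x) a x = 0 := by
    rw [taylor_within_apply]
    refine Finset.sum_eq_zero fun k hk => ?_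
    rw [uIcc_of_le hax.le, iteratedDerivWithin_Icc_eq_of_lt hxb hax,
      hflat k (Finset.mem_range_succ_iff.mp hk), smul_zero]
  rw [hpoly, sub_zero, uIcc_of_le hax.le, iteratedDerivWithin_Icc_eq_of_lt hxb hξ.2] at hTaylor
  exact ⟨ξ, hξ, hTaylor⟩

theorem mul_pow_le_of_flat {g : ℝ → ℝ} {r : ℕ} {a b x δ : ℝ}
    (hg : ContDiffOn ℝ (r + 1) g (Icc a b))
    (hflat : ∀ k ≤ r, iteratedDerivWithin k g (Icc a b) a = 0)
    (hδ : ∀ y ∈ Icc a b, δ ≤ |iteratedDerivWithin (r + 1) g (Icc a b) y| / (r + 1)!)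
    (hx : x ∈ Ioc a b) (hgx : 0 < g x) :
    δ * (x - a) ^ (r + 1) ≤ g x := by
  obtain ⟨ξ, hξ, hTaylor⟩ := exists_eq_iteratedDerivWithin_mul_pow_of_flat hg hflat hx
  have hpow : 0 < (x - a) ^ (r + 1) := pow_pos (sub_pos.mpr hx.1) _
  have habs :
      g x = |iteratedDerivWithin (r + 1) g (Icc a b) ξ| / (r + 1)! * (x - a) ^ (r + 1) := by
    rw [← abs_of_pos hgx, hTaylor, abs_div, abs_mul, abs_of_pos hpow, Nat.abs_cast]
    ring
  rw [habs]
  exact mul_le_mul_of_nonneg_right (hδ ξ ⟨hξ.1.le, hξ.2.le.trans hx.2⟩) hpow.le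

theorem abs_derivWithin_le_of_flat {g : ℝ → ℝ} {r : ℕ} {a b x σ : ℝ}
    (hg : ContDiffOn ℝ (r + 1) g (Icc a b))
    (hflat : ∀ k ≤ r, iteratedDerivWithin k g (Icc a b) a = 0)
    (hσ : ∀ y ∈ Icc a b, |iteratedDerivWithin (r + 1) g (Icc a b) y| / (r + 1)! ≤ σ)
    (hx : x ∈ Ioc a b) :
    |derivWithin g (Icc a b) x| ≤ (r + 1) * σ * (x - a) ^ r := by
  cases r with
  | zero => simpa using hσ x (Ioc_subset_Icc_self hx)
  | succ s =>
    set f := derivWithin g (Icc a b)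
    have hf : ContDiffOn ℝ (s + 1) f (Icc a b) :=
      hg.derivWithin (uniqueDiffOn_Icc (hx.1.trans_le hx.2)) (by push_cast; rfl)
    have hflat' : ∀ k ≤ s, iteratedDerivWithin k f (Icc a b) a = 0 := fun k hk => by
      rw [← iteratedDerivWithin_succ']
      exact hflat (k + 1) (by omega)
    obtain ⟨ξ, hξ, hTaylor⟩ := exists_eq_iteratedDerivWithin_mul_pow_of_flat hf hflat' hx
    rw [← iteratedDerivWithin_succ'] at hTaylor
    have hpow : 0 < (x - a) ^ (s + 1) := pow_pos (sub_pos.mpr hx.1) _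
    have hbound := hσ ξ ⟨hξ.1.le, hξ.2.le.trans hx.2⟩
    calc |f x|
        = (s + 1 + 1) * (|iteratedDerivWithin (s + 1 + 1) g (Icc a b) ξ| / (s + 1 + 1)!)
            * (x - a) ^ (s + 1) := by
          rw [hTaylor, abs_div, abs_mul, abs_of_pos hpow, Nat.abs_cast, Nat.factorial_succ (s + 1)]
          push_cast
          field_simp
      _ ≤ (s + 1 + 1) * σ * (x - a) ^ (s + 1) := by gcongr
      _ = ((s + 1 : ℕ) + 1) * σ * (x - a) ^ (s + 1) := by push_cast; ring

theorem one_lt_kappaSigma {κ : ℝ} (hκ : 1 < κ) (σr : ℝ) : 1 < kappaSigma κ σr := by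
  unfold kappaSigma
  split_ifs with hσ
  · exact hκ
  · nlinarith

section Nodes

variable {κσ : ℝ} {r n j : ℕ}

theorem nodeX_pos (hκσ : 0 < κσ) : 0 < nodeX κσ r n j :=
  Real.rpow_pos_of_pos hκσ _

theorem nodeX_le_one (hκσ : 1 ≤ κσ) (hj : j ≤ n) : nodeX κσ r n j ≤ 1 := by
  refine Real.rpow_le_one_of_one_le_of_nonpos hκσ
    (div_nonpos_of_nonpos_of_nonneg ?_ (by positivity))
  have : (j : ℝ) / n ≤ 1 := div_le_one_of_le₀ (by exact_mod_cast hj) n.cast_nonneg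
  linarith

theorem nodeX_le_nodeX_succ (hκσ : 1 ≤ κσ) : nodeX κσ r n j ≤ nodeX κσ r n (j + 1) := by
  apply Real.rpow_le_rpow_of_exponent_le hκσ
  gcongr
  linarith

theorem nodeX_succ_pow (hκσ : 0 < κσ) :
    nodeX κσ r n (j + 1) ^ r = κσ ^ ((r : ℝ) / (n * (r + 1))) * nodeX κσ r n j ^ r := by
  rcases eq_or_ne n 0 with rfl | hn
  · simp [nodeX]
  simp only [nodeX, ← Real.rpow_natCast, ← Real.rpow_mul hκσ.le, ← Real.rpow_add hκσ]
  congr 1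
  push_cast
  field_simp
  ring

end Nodes

theorem max_abs_derivWithin_mul_div_le {g : ℝ → ℝ} {r : ℕ} {σ δ a b : ℝ}
    (hg : ContDiffOn ℝ (r + 1) g (Icc 0 1)) (hmono : StrictMonoOn g (Icc 0 1))
    (hflat : ∀ k ≤ r, iteratedDerivWithin k g (Icc 0 1) 0 = 0)
    (hσ : ∀ y ∈ Icc (0 : ℝ) 1, |iteratedDerivWithin (r + 1) g (Icc 0 1) y| / (r + 1)! ≤ σ)
    (hδ : ∀ y ∈ Icc (0 : ℝ) 1, δ ≤ |iteratedDerivWithin (r + 1) g (Icc 0 1) y| / (r + 1)!)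
    (hδpos : 0 < δ) (ha : 0 < a) (hab : a ≤ b) (hb : b ≤ 1) :
    max |derivWithin g (Icc 0 1) a| |derivWithin g (Icc 0 1) b| * a / g a
      ≤ (r + 1) * σ * b ^ r / (δ * a ^ r) := by
  have hσnn : 0 ≤ σ :=
    (div_nonneg (abs_nonneg _) (by positivity)).trans (hσ 0 ⟨le_rfl, zero_le_one⟩)
  have hb0 : 0 < b := ha.trans_le hab
  have ha' : a ∈ Ioc 0 1 := ⟨ha, hab.trans hb⟩
  have hga : δ * a ^ (r + 1) ≤ g a := by
    have hg0 : g 0 = 0 := by simpa using hflat 0 r.zero_le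
    have hgpos : 0 < g a := hg0 ▸ hmono ⟨le_rfl, zero_le_one⟩ (Ioc_subset_Icc_self ha') ha
    simpa using mul_pow_le_of_flat hg hflat hδ ha' hgpos
  have hderiv : ∀ x ∈ Ioc (0 : ℝ) 1, |derivWithin g (Icc 0 1) x| ≤ (r + 1) * σ * x ^ r :=
    fun x hx => by simpa using abs_derivWithin_le_of_flat hg hflat hσ hx
  have hM : max |derivWithin g (Icc 0 1) a| |derivWithin g (Icc 0 1) b| ≤ (r + 1) * σ * b ^ r :=
    max_le ((hderiv a ha').trans (by gcongr)) (hderiv b ⟨hb0, hb⟩)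
  calc _ ≤ (r + 1) * σ * b ^ r * a / (δ * a ^ (r + 1)) := by gcongr
    _ = _ := by
      field_simp
      ring

theorem stmt_9_general (r : ℕ) (g : ℝ → ℝ) (σr δr : ℝ)
    (hgr : ContDiffOn ℝ (r+1) g (Set.Icc 0 1))
    (hmono : StrictMonoOn g (Set.Icc 0 1))
    (hg0 : ∀ j ≤ r, iteratedDerivWithin j g (Set.Icc 0 1) 0 = 0)
    (hgne : ∀ x ∈ Set.Icc (0:ℝ) 1, iteratedDerivWithin (r+1) g (Set.Icc 0 1) x ≠ 0)
    (hσ : IsGreatest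
      ((fun x => |iteratedDerivWithin (r+1) g (Set.Icc 0 1) x| / ((r+1).factorial : ℝ)) ''
        Set.Icc 0 1) σr)
    (hδ : IsLeast
      ((fun x => |iteratedDerivWithin (r+1) g (Set.Icc 0 1) x| / ((r+1).factorial : ℝ)) ''
        Set.Icc 0 1) δr) :
    ∀ (n : ℕ), 1 ≤ n → ∀ κ : ℝ, 1 < κ → ∀ j : ℕ, 1 ≤ j → j ≤ n →
      max |derivWithin g (Set.Icc 0 1) (nodeX (kappaSigma κ σr) r n (j-1))|
          |derivWithin g (Set.Icc 0 1) (nodeX (kappaSigma κ σr) r n j)|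
        * nodeX (kappaSigma κ σr) r n (j-1) / g (nodeX (kappaSigma κ σr) r n (j-1))
      ≤ ((r:ℝ)+1) * (kappaSigma κ σr) ^ ((r:ℝ)/((n:ℝ)*((r:ℝ)+1))) * σr / δr := by
  rintro n - κ hκ j hj hjn
  obtain ⟨i, rfl⟩ := Nat.exists_eq_add_of_le' hj
  rw [Nat.add_sub_cancel]
  set κσ := kappaSigma κ σr
  have hκσ : 1 < κσ := one_lt_kappaSigma hκ σr
  have hκσpos : 0 < κσ := by linarith
  have hδpos : 0 < δr := by
    obtain ⟨y, hy, rfl⟩ := hδ.1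
    have := hgne y hy
    positivity
  have hq := max_abs_derivWithin_mul_div_le hgr hmono hg0 (fun y hy => hσ.2 ⟨y, hy, rfl⟩)
    (fun y hy => hδ.2 ⟨y, hy, rfl⟩) hδpos (nodeX_pos (r := r) hκσpos)
    (nodeX_le_nodeX_succ hκσ.le) (nodeX_le_one hκσ.le hjn)
  rw [nodeX_succ_pow hκσpos] at hq
  refine hq.trans_eq ?_
  have : nodeX κσ r n i ≠ 0 := (nodeX_pos hκσpos).ne'
  field_simp

/-- under Assumption A(r), for all `n ∈ ℕ`, `κ > 1` and `1 ≤ j ≤ n`,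
`q_j = M_j x_{j-1}/g(x_{j-1}) ≤ (r+1) κ_{σ(r)}^{r/(n(r+1))} σ(r)/δ(r)`. -/
theorem stmt_9 (r : ℕ) (g : ℝ → ℝ) (σr δr : ℝ)
    (hgr : ContDiffOn ℝ (r+1) g (Set.Icc 0 1))
    (hmono : StrictMonoOn g (Set.Icc 0 1))
    (hnoinfl : ConvexOn ℝ (Set.Icc 0 1) g ∨ ConcaveOn ℝ (Set.Icc 0 1) g)
    (hg0 : ∀ j ≤ r, iteratedDerivWithin j g (Set.Icc 0 1) 0 = 0)
    (hgne : ∀ x ∈ Set.Icc (0:ℝ) 1, iteratedDerivWithin (r+1) g (Set.Icc 0 1) x ≠ 0)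
    (hσ : IsGreatest
      ((fun x => |iteratedDerivWithin (r+1) g (Set.Icc 0 1) x| / ((r+1).factorial : ℝ)) ''
        Set.Icc 0 1) σr)
    (hδ : IsLeast
      ((fun x => |iteratedDerivWithin (r+1) g (Set.Icc 0 1) x| / ((r+1).factorial : ℝ)) ''
        Set.Icc 0 1) δr) :
    ∀ (n : ℕ), 1 ≤ n → ∀ κ : ℝ, 1 < κ → ∀ j : ℕ, 1 ≤ j → j ≤ n →
      max |derivWithin g (Set.Icc 0 1) (nodeX (kappaSigma κ σr) r n (j-1))|
          |derivWithin g (Set.Icc 0 1) (nodeX (kappaSigma κ σr) r n j)|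
        * nodeX (kappaSigma κ σr) r n (j-1) / g (nodeX (kappaSigma κ σr) r n (j-1))
      ≤ ((r:ℝ)+1) * (kappaSigma κ σr) ^ ((r:ℝ)/((n:ℝ)*((r:ℝ)+1))) * σr / δr :=
  stmt_9_general r g σr δr hgr hmono hg0 hgne hσ hδ
end
end
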